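/- arXiv:1404.7417 — 10 statements merged into one kernel-verified Lean document; each statement's English description precedes it below -/
import Mathlib

section
/- If λ, t ∈ ℂ with λ ≠ 0 and both (1,1) and (−1,1) are projectively preperiodic for F_{λ,t} (i.e., the rational map f_{λ,t} is postcritically finite), then both λ and t are algebraic over ℚ. -/
open Filter Topology

noncomputable section

/-- The homogeneous lift `F_{λ,t}(z₁,z₂) = (λ z₁ z₂, z₁² + t z₁ z₂ + z₂²)`
of the quadratic rational map `f_{λ,t}(z) = λ z / (z² + t z + 1)`. -/
def Fh (lam t : ℂ) (z : ℂ × ℂ) : ℂ × ℂ :=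
  (lam * z.1 * z.2, z.1 ^ 2 + t * z.1 * z.2 + z.2 ^ 2)

/-- A point `z ∈ ℂ² \ {0}` is projectively preperiodic for `F_{λ,t}` if some higher
iterate is a nonzero scalar multiple of an earlier iterate. -/
def ProjPreperiodic (lam t : ℂ) (z : ℂ × ℂ) : Prop :=
  ∃ n m : ℕ, m < n ∧ ∃ α : ℂ, α ≠ 0 ∧ (Fh lam t)^[n] z = α • (Fh lam t)^[m] z

/-!
If `λ` were transcendental, some field embedding `σ : ℂ → ℂ` over `ℚ` would send it to
`λ / N` with `|λ / N| ≤ 1/16`. Preperiodicity of `±1` is a condition with rational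
coefficients, so it survives `σ`; but for `0 < |λ| ≤ 1/16` one of `±1` is drawn into the
attracting fixed point `0` with strictly decreasing modulus and never repeats.

Once `λ` is algebraic, preperiodicity of `1` is a polynomial equation in `t` with
coefficients in `ℚ[λ]`. It is a nontrivial one: for the `t` making `β = 1 - ε` a fixed
point, the multiplier `(1 - β²)/λ` is tiny and the disc `|z - β| ≤ ε`, which contains `1`,
is contracted towards `β`, so the orbit of `1` is infinite.
-/

def wedge {R : Type*} [CommRing R] (z w : R × R) : R := z.1 * w.2 - w.1 * z.2

theorem map_wedge {R S F : Type*} [CommRing R] [CommRing S] [FunLike F R S] [RingHomClass F R S]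
    (f : F) (z w : R × R) :
    f (wedge z w) = wedge (Prod.map f f z) (Prod.map f f w) := by
  simp [wedge]

def ProjOrbitInjective (lam t : ℂ) (z : ℂ × ℂ) : Prop :=
  ∀ m n : ℕ, m < n → wedge ((Fh lam t)^[n] z) ((Fh lam t)^[m] z) ≠ 0

theorem ProjPreperiodic.exists_wedge_eq_zero {lam t : ℂ} {z : ℂ × ℂ}
    (h : ProjPreperiodic lam t z) :
    ∃ m n : ℕ, m < n ∧ wedge ((Fh lam t)^[n] z) ((Fh lam t)^[m] z) = 0 := by
  obtain ⟨n, m, hmn, α, -, hα⟩ := h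
  refine ⟨m, n, hmn, ?_⟩
  simp only [hα, wedge, Prod.smul_fst, Prod.smul_snd, smul_eq_mul]
  ring

theorem ProjPreperiodic.not_projOrbitInjective {lam t : ℂ} {z : ℂ × ℂ}
    (h : ProjPreperiodic lam t z) : ¬ ProjOrbitInjective lam t z := fun hinj ↦
  have ⟨m, n, hmn, h0⟩ := h.exists_wedge_eq_zero
  hinj m n hmn h0

theorem Fh_semiconj_map (σ : ℂ →+* ℂ) (lam t : ℂ) :
    Function.Semiconj (Prod.map σ σ) (Fh lam t) (Fh (σ lam) (σ t)) := by
  intro z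
  simp [Fh]

theorem ProjPreperiodic.map {lam t : ℂ} {z : ℂ × ℂ} (h : ProjPreperiodic lam t z)
    (σ : ℂ →+* ℂ) : ProjPreperiodic (σ lam) (σ t) (Prod.map σ σ z) := by
  obtain ⟨n, m, hmn, α, hα, h⟩ := h
  refine ⟨n, m, hmn, σ α, (map_ne_zero σ).2 hα, ?_⟩
  simp only [← ((Fh_semiconj_map σ lam t).iterate_right _).eq, h]
  simp [Prod.map, Prod.smul_mk]

def ratMap (lam t z : ℂ) : ℂ := lam * z / (z ^ 2 + t * z + 1)

theorem Fh_smul_mk_one {lam t z : ℂ} (hz : z ^ 2 + t * z + 1 ≠ 0) (v : ℂ) :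
    Fh lam t (v • (z, 1)) = (v ^ 2 * (z ^ 2 + t * z + 1)) • (ratMap lam t z, 1) := by
  simp only [Fh, ratMap, Prod.smul_mk, smul_eq_mul, Prod.mk.injEq]
  constructor
  · rw [mul_div_assoc', eq_div_iff hz]
    ring
  · ring

theorem iterate_Fh_mk_one {lam t a : ℂ}
    (hden : ∀ k, (ratMap lam t)^[k] a ^ 2 + t * (ratMap lam t)^[k] a + 1 ≠ 0) (k : ℕ) :
    ∃ v : ℂ, v ≠ 0 ∧ (Fh lam t)^[k] (a, 1) = v • ((ratMap lam t)^[k] a, 1) := by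
  induction k with
  | zero => exact ⟨1, one_ne_zero, by simp⟩
  | succ k ih =>
    obtain ⟨v, hv, hk⟩ := ih
    refine ⟨_, mul_ne_zero (pow_ne_zero 2 hv) (hden k), ?_⟩
    rw [Function.iterate_succ_apply', hk, Fh_smul_mk_one (hden k), Function.iterate_succ_apply']

theorem projOrbitInjective_of_injective {lam t a : ℂ}
    (hden : ∀ k, (ratMap lam t)^[k] a ^ 2 + t * (ratMap lam t)^[k] a + 1 ≠ 0)
    (hinj : Function.Injective fun k ↦ (ratMap lam t)^[k] a) :
    ProjOrbitInjective lam t (a, 1) := by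
  intro m n hmn
  obtain ⟨v, hv, hn⟩ := iterate_Fh_mk_one hden n
  obtain ⟨w, hw, hm⟩ := iterate_Fh_mk_one hden m
  have hne : (ratMap lam t)^[n] a - (ratMap lam t)^[m] a ≠ 0 :=
    sub_ne_zero.2 fun h ↦ hmn.ne' (hinj h)
  rw [hn, hm]
  convert mul_ne_zero (mul_ne_zero hv hw) hne using 1
  simp only [wedge, Prod.smul_fst, Prod.smul_snd, smul_eq_mul]
  ring

section Contraction

variable {X : Type*} [MetricSpace X] {g : X → X} {P : Set X} {β : X}

theorem iterate_mem_ne_of_contracting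
    (hP : ∀ z ∈ P, z ≠ β → g z ∈ P ∧ g z ≠ β ∧ dist (g z) β < dist z β)
    {a : X} (ha : a ∈ P) (haβ : a ≠ β) (k : ℕ) : g^[k] a ∈ P ∧ g^[k] a ≠ β := by
  induction k with
  | zero => exact ⟨ha, haβ⟩
  | succ k ih =>
    rw [Function.iterate_succ_apply']
    exact ⟨(hP _ ih.1 ih.2).1, (hP _ ih.1 ih.2).2.1⟩

theorem strictAnti_dist_iterate_of_contracting
    (hP : ∀ z ∈ P, z ≠ β → g z ∈ P ∧ g z ≠ β ∧ dist (g z) β < dist z β)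
    {a : X} (ha : a ∈ P) (haβ : a ≠ β) : StrictAnti fun k ↦ dist (g^[k] a) β := by
  refine strictAnti_nat_of_succ_lt fun k ↦ ?_
  obtain ⟨hk, hkβ⟩ := iterate_mem_ne_of_contracting hP ha haβ k
  simpa only [Function.iterate_succ_apply'] using (hP _ hk hkβ).2.2

end Contraction

theorem projOrbitInjective_of_contracting {lam t a β : ℂ} {P : Set ℂ}
    (hden : ∀ z ∈ P, z ^ 2 + t * z + 1 ≠ 0)
    (hP : ∀ z ∈ P, z ≠ β →
      ratMap lam t z ∈ P ∧ ratMap lam t z ≠ β ∧ ‖ratMap lam t z - β‖ < ‖z - β‖)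
    (ha : a ∈ P) (haβ : a ≠ β) : ProjOrbitInjective lam t (a, 1) := by
  simp only [← Complex.dist_eq] at hP
  exact projOrbitInjective_of_injective
    (fun k ↦ hden _ (iterate_mem_ne_of_contracting hP ha haβ k).1)
    fun m n h ↦ (strictAnti_dist_iterate_of_contracting hP ha haβ).injective
      (congrArg (dist · β) h)

theorem norm_mul_ratMap (lam t z c : ℂ) :
    ‖c * ratMap lam t z‖ = ‖lam‖ * ‖c * z‖ / ‖z ^ 2 + t * z + 1‖ := by
  simp only [ratMap, norm_mul, norm_div]
  ring

theorem quarter_le_norm_den {t z : ℂ} (hz : ‖z‖ ≤ 1 / 8) (htz : ‖t * z‖ ≤ 1 / 2) :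
    1 / 4 ≤ ‖z ^ 2 + t * z + 1‖ := by
  have hz2 : ‖z ^ 2‖ ≤ 1 / 64 := by
    rw [norm_pow]
    nlinarith [norm_nonneg z]
  have h := norm_le_add_norm_add (1 : ℂ) (z ^ 2 + t * z)
  rw [norm_one, add_comm (1 : ℂ)] at h
  linarith [norm_add_le (z ^ 2) (t * z)]

theorem projOrbitInjective_of_norm_le {lam t s : ℂ} (hlam : lam ≠ 0) (hlam16 : ‖lam‖ ≤ 1 / 16)
    (hs : ‖s‖ = 1) (hden : 2 ≤ ‖s ^ 2 + t * s + 1‖) : ProjOrbitInjective lam t (s, 1) := by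
  have hts : ‖t * s‖ ≤ ‖s ^ 2 + t * s + 1‖ + 2 := by
    have h := norm_sub_le (s ^ 2 + t * s + 1) (s ^ 2 + 1)
    rw [show s ^ 2 + t * s + 1 - (s ^ 2 + 1) = t * s by ring] at h
    linarith [norm_add_le (s ^ 2) 1, show ‖s ^ 2‖ = 1 by simp [hs], norm_one (α := ℂ)]
  -- on `P₀` the denominator of `f` is at least `1/4`, so `f` shrinks both `|z|` and `|t z|` by `4`
  set P₀ : Set ℂ := {z | ‖z‖ ≤ 1 / 8 ∧ ‖t * z‖ ≤ 1 / 2}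
  have hP₀ : ∀ z ∈ P₀, 1 / 4 ≤ ‖z ^ 2 + t * z + 1‖ := fun z hz ↦ quarter_le_norm_den hz.1 hz.2
  have hf_ne : ∀ z, z ≠ 0 → z ^ 2 + t * z + 1 ≠ 0 → ratMap lam t z ≠ 0 :=
    fun z hz hd ↦ div_ne_zero (mul_ne_zero hlam hz) hd
  have hf (z : ℂ) : ‖ratMap lam t z‖ = ‖lam‖ * ‖z‖ / ‖z ^ 2 + t * z + 1‖ := by
    simpa using norm_mul_ratMap lam t z 1
  refine projOrbitInjective_of_contracting (P := insert s P₀) (β := 0) ?_ ?_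
    (Set.mem_insert s P₀) (by rintro rfl; simp at hs)
  · rintro z (rfl | hz) <;> rw [← norm_pos_iff]
    · linarith
    · linarith [hP₀ z hz]
  · simp only [sub_zero]
    rintro z (rfl | hz) hz0
    · have hd : 0 < ‖z ^ 2 + t * z + 1‖ := by linarith
      have hfz : ‖ratMap lam t z‖ ≤ 1 / 32 := by
        rw [hf, hs, div_le_iff₀ hd]
        linarith
      have htfz : ‖t * ratMap lam t z‖ ≤ 1 / 8 := by
        rw [norm_mul_ratMap, div_le_iff₀ hd]
        nlinarith [norm_nonneg lam]
      exact ⟨Or.inr ⟨by linarith, by linarith⟩, hf_ne z hz0 (norm_pos_iff.1 hd), by linarith⟩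
    · have hd : 0 < ‖z ^ 2 + t * z + 1‖ := by linarith [hP₀ z hz]
      have hfz : ‖ratMap lam t z‖ ≤ ‖z‖ / 4 := by
        rw [hf, div_le_iff₀ hd]
        nlinarith [hP₀ z hz, norm_nonneg z]
      have htfz : ‖t * ratMap lam t z‖ ≤ ‖t * z‖ / 4 := by
        rw [norm_mul_ratMap, div_le_iff₀ hd]
        nlinarith [hP₀ z hz, norm_nonneg (t * z)]
      refine ⟨Or.inr ⟨by linarith [hz.1], by linarith [hz.2]⟩, hf_ne z hz0 (norm_pos_iff.1 hd), ?_⟩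
      linarith [norm_pos_iff.2 hz0]

theorem projOrbitInjective_one_or_neg_one {lam t : ℂ} (hlam : lam ≠ 0) (hlam16 : ‖lam‖ ≤ 1 / 16) :
    ProjOrbitInjective lam t (1, 1) ∨ ProjOrbitInjective lam t (-1, 1) := by
  have h4 : 4 ≤ ‖2 + t‖ + ‖2 - t‖ := by
    simpa [show (2 + t) + (2 - t) = (4 : ℂ) by ring] using norm_add_le (2 + t) (2 - t)
  by_cases h : 2 ≤ ‖2 + t‖
  · refine .inl <| projOrbitInjective_of_norm_le hlam hlam16 (by simp) ?_
    rwa [show (1 : ℂ) ^ 2 + t * 1 + 1 = 2 + t by ring]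
  · refine .inr <| projOrbitInjective_of_norm_le hlam hlam16 (by simp) ?_
    rw [show (-1 : ℂ) ^ 2 + t * -1 + 1 = 2 - t by ring]
    linarith

def fixParam (lam β : ℂ) : ℂ := -β - (1 - lam) / β

theorem fixParam_fixed {lam β : ℂ} (hβ : β ≠ 0) : β ^ 2 + fixParam lam β * β + 1 = lam := by
  simp only [fixParam]
  field_simp
  ring

theorem den_eq_of_fixed {lam t β z : ℂ} (hβ : β ^ 2 + t * β + 1 = lam) :
    z ^ 2 + t * z + 1 = lam + (z - β) * (z + β + t) := by
  linear_combination hβ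

theorem ratMap_sub_of_fixed {lam t β z : ℂ} (hβ : β ^ 2 + t * β + 1 = lam)
    (hz : z ^ 2 + t * z + 1 ≠ 0) :
    ratMap lam t z - β = (z - β) * (1 - β * z) / (z ^ 2 + t * z + 1) := by
  rw [ratMap, eq_div_iff hz, sub_mul, div_mul_cancel₀ _ hz, ← hβ]
  ring

section NearOne

variable {lam z : ℂ} {ε : ℝ}

theorem norm_one_sub_real (hε : ε ≤ 1) : ‖1 - (ε : ℂ)‖ = 1 - ε := by
  rw [← Complex.ofReal_one, ← Complex.ofReal_sub, Complex.norm_real, Real.norm_of_nonneg (by linarith)]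

theorem half_norm_le_norm_den_fixParam (hε : 0 < ε) (hε8 : ε ≤ 1 / 8) (hεlam : 100 * ε ≤ ‖lam‖)
    (hz : ‖z - (1 - ε)‖ ≤ ε) :
    ‖lam‖ / 2 ≤ ‖z ^ 2 + fixParam lam (1 - ε) * z + 1‖ := by
  set β : ℂ := 1 - ε
  have hβ : ‖β‖ = 1 - ε := norm_one_sub_real (by linarith)
  have hβ0 : β ≠ 0 := norm_pos_iff.1 (by linarith)
  have h1 : ‖(1 - lam) / β‖ ≤ 8 / 7 * (1 + ‖lam‖) := by
    rw [norm_div, hβ, div_le_iff₀ (by linarith)]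
    nlinarith [norm_sub_le (1 : ℂ) lam, norm_one (α := ℂ), norm_nonneg lam]
  have h2 : ‖z + β + fixParam lam β‖ ≤ ε + (1 + 8 / 7 * (1 + ‖lam‖)) := by
    rw [show z + β + fixParam lam β = (z - β) + (β - (1 - lam) / β) by simp only [fixParam]; ring]
    linarith [norm_add_le (z - β) (β - (1 - lam) / β), norm_sub_le β ((1 - lam) / β)]
  have h3 : ‖(z - β) * (z + β + fixParam lam β)‖ ≤ ε * (ε + (1 + 8 / 7 * (1 + ‖lam‖))) := by
    rw [norm_mul]
    exact mul_le_mul hz h2 (norm_nonneg _) hε.le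
  have h4 := norm_le_add_norm_add lam ((z - β) * (z + β + fixParam lam β))
  rw [den_eq_of_fixed (fixParam_fixed hβ0)]
  nlinarith

theorem one_sub_mul_ne_zero_and_norm_le (hε : 0 < ε) (hε8 : ε ≤ 1 / 8) (hz : ‖z - (1 - ε)‖ ≤ ε) :
    1 - (1 - ε) * z ≠ 0 ∧ ‖1 - (1 - ε) * z‖ ≤ 3 * ε := by
  have hβ : ‖1 - (ε : ℂ)‖ = 1 - ε := norm_one_sub_real (by linarith)
  have hsplit : 1 - (1 - ε) * z = ((ε * (2 - ε) : ℝ) : ℂ) - (1 - ε) * (z - (1 - ε)) := by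
    push_cast
    ring
  have hreal : ‖((ε * (2 - ε) : ℝ) : ℂ)‖ = ε * (2 - ε) := by
    rw [Complex.norm_real, Real.norm_of_nonneg (by nlinarith)]
  have hprod : ‖(1 - (ε : ℂ)) * (z - (1 - ε))‖ ≤ (1 - ε) * ε := by
    rw [norm_mul, hβ]
    exact mul_le_mul_of_nonneg_left hz (by linarith)
  rw [hsplit]
  refine ⟨fun h ↦ ?_, ?_⟩
  · have := norm_sub_norm_le ((ε * (2 - ε) : ℝ) : ℂ) ((1 - ε) * (z - (1 - ε)))
    rw [h, norm_zero, hreal] at this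
    nlinarith
  · nlinarith [norm_sub_le ((ε * (2 - ε) : ℝ) : ℂ) ((1 - ε) * (z - (1 - ε)))]

theorem projOrbitInjective_one_fixParam (hε : 0 < ε) (hε8 : ε ≤ 1 / 8)
    (hεlam : 100 * ε ≤ ‖lam‖) : ProjOrbitInjective lam (fixParam lam (1 - ε)) (1, 1) := by
  have hβ0 : (1 - ε : ℂ) ≠ 0 := norm_pos_iff.1 (by rw [norm_one_sub_real] <;> linarith)
  have hlam : 0 < ‖lam‖ := by linarith
  refine projOrbitInjective_of_contracting (P := {z | ‖z - (1 - ε)‖ ≤ ε}) (β := 1 - ε)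
    (fun z hz ↦ norm_pos_iff.1 (by linarith [half_norm_le_norm_den_fixParam hε hε8 hεlam hz])) ?_
    (by simp [abs_of_pos hε])
    (by rw [ne_eq, eq_sub_iff_add_eq, add_eq_left, Complex.ofReal_eq_zero]; exact hε.ne')
  intro z (hz : ‖z - (1 - ε)‖ ≤ ε) hzβ
  have hd := half_norm_le_norm_den_fixParam hε hε8 hεlam hz
  have hd0 : z ^ 2 + fixParam lam (1 - ε) * z + 1 ≠ 0 := norm_pos_iff.1 (by linarith)
  obtain ⟨hne, hle⟩ := one_sub_mul_ne_zero_and_norm_le hε hε8 hz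
  have hzβ' : 0 < ‖z - (1 - ε)‖ := norm_pos_iff.2 (sub_ne_zero.2 hzβ)
  have hfz := ratMap_sub_of_fixed (z := z) (fixParam_fixed (lam := lam) hβ0) hd0
  have key : ‖ratMap lam (fixParam lam (1 - ε)) z - (1 - ε)‖ ≤ ‖z - (1 - ε)‖ / 2 := by
    rw [hfz, norm_div, norm_mul, div_le_iff₀ (by linarith)]
    nlinarith
  refine ⟨(by linarith : _ ≤ ε), ?_, by linarith⟩
  rw [← sub_ne_zero, hfz]
  exact div_ne_zero (mul_ne_zero (sub_ne_zero.2 hzβ) hne) hd0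

theorem exists_projOrbitInjective_one (hlam : lam ≠ 0) : ∃ t, ProjOrbitInjective lam t (1, 1) :=
  ⟨_, projOrbitInjective_one_fixParam (ε := min (1 / 8) (‖lam‖ / 100))
    (lt_min (by norm_num) (by positivity)) (min_le_left _ _)
    (by linarith [min_le_right (1 / 8 : ℝ) (‖lam‖ / 100)])⟩

end NearOne

section PolynomialOrbit

open Polynomial

variable {R : Type*} [CommRing R] [Algebra R ℂ]

def polyFh (κ : R) (z : R[X] × R[X]) : R[X] × R[X] :=
  (C κ * z.1 * z.2, z.1 ^ 2 + X * z.1 * z.2 + z.2 ^ 2)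

theorem polyFh_semiconj (κ : R) (t : ℂ) :
    Function.Semiconj (Prod.map (aeval t) (aeval t)) (polyFh κ) (Fh (algebraMap R ℂ κ) t) := by
  intro z
  simp [polyFh, Fh]

theorem isAlgebraic_of_projPreperiodic {κ : R} {t t₀ : ℂ} (z : R × R)
    (h : ProjPreperiodic (algebraMap R ℂ κ) t (Prod.map (algebraMap R ℂ) (algebraMap R ℂ) z))
    (h₀ : ProjOrbitInjective (algebraMap R ℂ κ) t₀
      (Prod.map (algebraMap R ℂ) (algebraMap R ℂ) z)) :
    IsAlgebraic R t := by
  obtain ⟨m, n, hmn, h⟩ := h.exists_wedge_eq_zero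
  let orbit (k : ℕ) := (polyFh κ)^[k] (Prod.map C C z)
  have heval (s : ℂ) (k : ℕ) : Prod.map (aeval s) (aeval s) (orbit k) =
      (Fh (algebraMap R ℂ κ) s)^[k] (Prod.map (algebraMap R ℂ) (algebraMap R ℂ) z) := by
    rw [((polyFh_semiconj κ s).iterate_right k).eq, Prod.map_map]
    simp [Function.comp_def]
  refine ⟨wedge (orbit n) (orbit m), fun h0 ↦ h₀ m n hmn ?_, ?_⟩
  · rw [← heval, ← heval, ← map_wedge, h0, map_zero]
  · rw [map_wedge, heval, heval, h]

end PolynomialOrbit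

open MvPolynomial in
theorem AlgebraicIndependent.units_smul {ι R A : Type*} [CommRing R] [CommRing A] [Algebra R A]
    {x : ι → A} (hx : AlgebraicIndependent R x) (u : ι → Rˣ) :
    AlgebraicIndependent R (fun i ↦ u i • x i) := by
  let scale : (ι → Rˣ) → MvPolynomial ι R →ₐ[R] MvPolynomial ι R :=
    fun v ↦ aeval fun i ↦ C (v i : R) * X i
  have hscale : (aeval x).comp (scale u) = aeval fun i ↦ u i • x i := by
    ext i; simp [scale, Units.smul_def, Algebra.smul_def]
  have hinv : (scale u⁻¹).comp (scale u) = AlgHom.id R _ := by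
    ext i; simp [scale, ← mul_assoc, ← C_mul]
  rw [algebraicIndependent_iff_injective_aeval, ← hscale, AlgHom.coe_comp]
  exact (algebraicIndependent_iff_injective_aeval.1 hx).comp
    (Function.LeftInverse.injective (g := scale u⁻¹) (AlgHom.congr_fun hinv))

/-- Rescaling `a` inside a transcendence basis containing it defines an embedding of the
field it generates, which extends to `E` because `E` is algebraic over that field. -/
theorem Transcendental.exists_algHom_apply_eq_smul {F E : Type*} [Field F] [Field E] [Algebra F E]
    [IsAlgClosed E] {a : E} (ha : Transcendental F a) {c : F} (hc : c ≠ 0) :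
    ∃ φ : E →ₐ[F] E, φ a = c • a := by
  classical
  have ha' : AlgebraicIndepOn F id {a} :=
    (algebraicIndependent_singleton_iff (x := ((↑) : ({a} : Set E) → E)) ⟨a, rfl⟩).2 ha
  obtain ⟨T, haT, hT⟩ := exists_isTranscendenceBasis_superset ha'
  let i₀ : T := ⟨a, haT rfl⟩
  have hw := hT.1.units_smul fun i ↦ if i = i₀ then Units.mk0 c hc else 1
  have := hT.isAlgebraic_field
  let f := (IsFractionRing.liftAlgHom (K := FractionRing (MvPolynomial T F))
    (algebraicIndependent_iff_injective_aeval.1 hw)).comp hT.1.reprField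
  obtain ⟨φ, hφ⟩ := IntermediateField.exists_algHom_of_splits' (E := E) f
    fun s ↦ ⟨(Algebra.IsAlgebraic.isAlgebraic s).isIntegral, IsAlgClosed.splits _⟩
  let a' : IntermediateField.adjoin F (Set.range ((↑) : T → E)) :=
    ⟨a, IntermediateField.subset_adjoin _ _ ⟨i₀, rfl⟩⟩
  have hrepr : hT.1.reprField a' =
      algebraMap (MvPolynomial T F) (FractionRing (MvPolynomial T F)) (MvPolynomial.X i₀) := by
    apply hT.1.aevalEquivField.injective
    rw [AlgebraicIndependent.reprField, AlgEquiv.coe_toAlgHom, AlgEquiv.apply_symm_apply]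
    ext
    simp [a', i₀]
  have hφa := AlgHom.congr_fun hφ a'
  simp only [AlgHom.domRestrict, AlgHom.comp_apply, f, hrepr, IsFractionRing.liftAlgHom_apply,
    IsFractionRing.lift_algebraMap] at hφa
  exact ⟨φ, by simpa [i₀] using hφa⟩

theorem isAlgebraic_lam_of_projPreperiodic {lam t : ℂ} (hplus : ProjPreperiodic lam t (1, 1))
    (hminus : ProjPreperiodic lam t (-1, 1)) : IsAlgebraic ℚ lam := by
  by_contra hlam
  obtain ⟨N, hN⟩ := exists_nat_gt (16 * ‖lam‖)
  have hNpos : (0 : ℝ) < N := lt_of_le_of_lt (by positivity) hN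
  have hN0 : (N : ℚ)⁻¹ ≠ 0 := inv_ne_zero (by exact_mod_cast hNpos.ne')
  obtain ⟨σ, hσ⟩ := Transcendental.exists_algHom_apply_eq_smul hlam hN0
  have hσlam : σ lam ≠ 0 := by
    rw [hσ]
    exact smul_ne_zero hN0 (by rintro rfl; exact hlam isAlgebraic_zero)
  have hσlam16 : ‖σ lam‖ ≤ 1 / 16 := by
    rw [hσ, Rat.smul_def, norm_mul, Rat.cast_inv, Rat.cast_natCast, norm_inv, Complex.norm_natCast,
      inv_mul_le_iff₀ hNpos]
    linarith
  rcases projOrbitInjective_one_or_neg_one (t := σ t) hσlam hσlam16 with h | h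
  · exact (hplus.map σ.toRingHom).not_projOrbitInjective (by simpa using h)
  · exact (hminus.map σ.toRingHom).not_projOrbitInjective (by simpa using h)

theorem isAlgebraic_t_of_projPreperiodic {lam t : ℂ} (hlam : lam ≠ 0) (hlamAlg : IsAlgebraic ℚ lam)
    (hplus : ProjPreperiodic lam t (1, 1)) : IsAlgebraic ℚ t := by
  have : Algebra.IsIntegral ℚ (Algebra.adjoin ℚ {lam}) :=
    Algebra.IsIntegral.adjoin (by simpa using hlamAlg.isIntegral)
  obtain ⟨t₀, ht₀⟩ := exists_projOrbitInjective_one hlam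
  have ht : IsAlgebraic (Algebra.adjoin ℚ {lam}) t :=
    isAlgebraic_of_projPreperiodic (κ := ⟨lam, Algebra.self_mem_adjoin_singleton ℚ lam⟩)
      (1, 1) (by simpa using hplus) (t₀ := t₀) (by simpa using ht₀)
  exact ht.restrictScalars_of_isIntegral ℚ

/-- If `λ ≠ 0` and both critical points `+1` and `-1` are preperiodic for
`f_{λ,t}` (i.e. `f_{λ,t}` is postcritically finite), then `λ` and `t` are
algebraic over `ℚ`. -/
theorem PCF_implies_algebraic (lam t : ℂ) (hlam : lam ≠ 0)
    (hplus : ProjPreperiodic lam t (1, 1)) (hminus : ProjPreperiodic lam t (-1, 1)) :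
    IsAlgebraic ℚ lam ∧ IsAlgebraic ℚ t :=
  have hlamAlg := isAlgebraic_lam_of_projPreperiodic hplus hminus
  ⟨hlamAlg, isAlgebraic_t_of_projPreperiodic hlam hlamAlg hplus⟩
end
end

section
/- For every λ ∈ ℂ ∖ {0} and every pair of integers n, m ≥ 0, there exists t ∈ ℂ such that F_{λ,t}ⁿ(1,1) is not a scalar multiple of F_{λ,t}ᵐ(−1,1); equivalently, f_{λ,t}ⁿ(+1) ≠ f_{λ,t}ᵐ(−1) as points of ℙ¹(ℂ). In particular, the two critical points satisfy no orbit relation of the form f_tⁿ(+1) ≡ f_tᵐ(−1) identically in t. -/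
/-!
For `t = 2 - λ` the linear form `z₁ + z₂` is squared by `F_{λ,t}`, so along the orbit of `(1,1)`
it takes the values `2 ^ 2 ^ n ≠ 0`, while along the orbit of `(-1,1)` it vanishes identically
(the line `z₁ + z₂ = 0` lies over the fixed critical point `-1`). A nonzero scalar multiple of a
point of the second orbit therefore never lies on the first.
-/

open Filter Topology

noncomputable section

theorem Fh_semiconj_sq (lam : ℂ) :
    Function.Semiconj (fun z : ℂ × ℂ => z.1 + z.2) (Fh lam (2 - lam)) (· ^ 2) := fun z => by
  simp only [Fh]
  ring

theorem Fh_iterate_fst_add_snd (lam : ℂ) (k : ℕ) (z : ℂ × ℂ) :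
    ((Fh lam (2 - lam))^[k] z).1 + ((Fh lam (2 - lam))^[k] z).2 = (z.1 + z.2) ^ 2 ^ k := by
  rw [((Fh_semiconj_sq lam).iterate_right k).eq, pow_iterate]

theorem no_orbit_relation_general (lam : ℂ) (n m : ℕ) :
    ∃ t : ℂ, ¬ ∃ α : ℂ, α ≠ 0 ∧ (Fh lam t)^[n] (1, 1) = α • (Fh lam t)^[m] (-1, 1) := by
  refine ⟨2 - lam, ?_⟩
  rintro ⟨α, -, heq⟩
  have hsum := congrArg (fun z : ℂ × ℂ => z.1 + z.2) heq
  simp only [Prod.smul_fst, Prod.smul_snd, smul_eq_mul, ← mul_add,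
    Fh_iterate_fst_add_snd] at hsum
  norm_num at hsum

/-- For every `λ ≠ 0` and all integers `n, m ≥ 0`, there is a parameter `t`
at which `F_{λ,t}ⁿ(1,1)` is not a (nonzero) scalar multiple of
`F_{λ,t}ᵐ(-1,1)`; equivalently `f_{λ,t}ⁿ(+1) ≠ f_{λ,t}ᵐ(-1)` in `ℙ¹(ℂ)`.
In particular the two critical points satisfy no orbit relation
`f_tⁿ(+1) ≡ f_tᵐ(-1)` identically in `t`. -/
theorem no_orbit_relation (lam : ℂ) (hlam : lam ≠ 0) (n m : ℕ) :
    ∃ t : ℂ, ¬ ∃ α : ℂ, α ≠ 0 ∧ (Fh lam t)^[n] (1, 1) = α • (Fh lam t)^[m] (-1, 1) :=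
  no_orbit_relation_general lam n m
end
end

section
/- There exists a real number t₀ > 2√3 such that the critical point 1 is periodic of exact period 3 for the map f_{−2,t₀}(z) = −2z/(z² + t₀ z + 1): namely, F_{−2,t₀}³(1,1) is a nonzero scalar multiple of (1,1), while F_{−2,t₀}(1,1) is not a scalar multiple of (1,1). -/
/-!
Along the orbit of `(1, 1)` under `F_{-2,t}` the third iterate has coordinates
`8 (t + 2)(t² - 8)` and `8 (t + 2)(t² - 8) - (t + 4) Q(t)` with `Q(t) = 3t³ + 4t² - 32t - 64`,
so `1` has period dividing `3` at every root of `Q`. The intermediate value theorem gives a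
real root of `Q` in `[3.48, 3.49]`, beyond `2√3 < 3.47`, where `(t + 2)(t² - 8) > 0`; and the
first iterate `(-2, t + 2)` is proportional to `(1, 1)` only for `t = -4`.
-/

open Filter Topology

noncomputable section

theorem exists_smul_Fh_one_one_iff (lam t : ℂ) :
    (∃ α : ℂ, Fh lam t (1, 1) = α • ((1, 1) : ℂ × ℂ)) ↔ t + 2 = lam := by
  simp only [Fh, Prod.smul_mk, smul_eq_mul, Prod.mk.injEq, mul_one]
  constructor
  · rintro ⟨α, hlam, ht⟩
    linear_combination ht - hlam
  · intro h
    exact ⟨lam, rfl, by linear_combination h⟩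

theorem Fh_neg_two_iterate_three_one_one (t : ℂ) :
    (Fh (-2) t)^[3] (1, 1) =
      (8 * (t + 2) * (t ^ 2 - 8),
        8 * (t + 2) * (t ^ 2 - 8) - (t + 4) * (3 * t ^ 3 + 4 * t ^ 2 - 32 * t - 64)) := by
  simp only [Function.iterate_succ, Function.iterate_zero, Function.comp_apply, id, Fh]
  ext <;> ring

theorem exists_root_cubic_mem_Icc :
    ∃ t ∈ Set.Icc (3.48 : ℝ) 3.49, 3 * t ^ 3 + 4 * t ^ 2 - 32 * t - 64 = 0 := by
  have hcont : ContinuousOn (fun t : ℝ => 3 * t ^ 3 + 4 * t ^ 2 - 32 * t - 64)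
      (Set.Icc 3.48 3.49) := by fun_prop
  exact intermediate_value_Icc (by norm_num) hcont ⟨by norm_num, by norm_num⟩

theorem two_mul_sqrt_three_lt : 2 * Real.sqrt 3 < 3.48 := by
  have h : Real.sqrt 3 < 1.74 := (Real.sqrt_lt' (by norm_num)).2 (by norm_num)
  linarith

/-- There exists a real parameter `t₀ > 2√3` such that the critical point `1`
is periodic of exact period `3` for `f_{-2,t₀}`: the third iterate of `(1,1)`
under `F_{-2,t₀}` is a nonzero scalar multiple of `(1,1)`, while the first
iterate is not a scalar multiple of `(1,1)`. -/
theorem exists_period_three_parameter :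
    ∃ t₀ : ℝ, 2 * Real.sqrt 3 < t₀ ∧
      (∃ α : ℂ, α ≠ 0 ∧ (Fh (-2) (t₀ : ℂ))^[3] (1, 1) = α • ((1, 1) : ℂ × ℂ)) ∧
      ¬ ∃ α : ℂ, Fh (-2) (t₀ : ℂ) (1, 1) = α • ((1, 1) : ℂ × ℂ) := by
  obtain ⟨t₀, ⟨hlo, -⟩, hroot⟩ := exists_root_cubic_mem_Icc
  have hrootC : 3 * (t₀ : ℂ) ^ 3 + 4 * (t₀ : ℂ) ^ 2 - 32 * t₀ - 64 = 0 := by exact_mod_cast hroot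
  have hpos : 0 < 8 * (t₀ + 2) * (t₀ ^ 2 - 8) := by
    have : 8 < t₀ ^ 2 := by nlinarith
    positivity
  refine ⟨t₀, two_mul_sqrt_three_lt.trans_le hlo, ⟨8 * (t₀ + 2) * (t₀ ^ 2 - 8), ?_, ?_⟩, ?_⟩
  · exact_mod_cast hpos.ne'
  · rw [Fh_neg_two_iterate_three_one_one, hrootC]
    simp
  · rw [exists_smul_Fh_one_one_iff]
    exact_mod_cast (by linarith : t₀ + 2 ≠ -2)
end
end

section
/- For each λ ∈ ℂ ∖ {0} there exist constants c, C > 0 such that c |t|⁻¹ ‖(z₁,z₂)‖² ≤ ‖F_{λ,t}(z₁,z₂)‖ ≤ C |t| ‖(z₁,z₂)‖² for all t ∈ ℂ with |t| ≥ 1 and all (z₁,z₂) ∈ ℂ² ∖ {(0,0)}. Consequently, there exists R > 1 such that |H⁺_λ(t)| ≤ 3 log|t| and |H⁻_λ(t)| ≤ 3 log|t| for all t with |t| ≥ R; in particular H^±_λ(t) = O(log|t|) as t → ∞. -/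
/-! If `c ‖z‖² ≤ ‖F z‖ ≤ C ‖z‖²`, then `aₙ = log ‖Fⁿ z₀‖` satisfies
`2 aₙ + log c ≤ aₙ₊₁ ≤ 2 aₙ + log C`, which pins the escape rate `lim aₙ / 2ⁿ` between
`log ‖z₀‖ + log c` and `log ‖z₀‖ + log C`. For `F_{λ,t}` with `|t| ≥ 1` one may take
`c ≍ |t|⁻¹` and `C ≍ |t|`: the upper bound is the triangle inequality, and the lower bound
comes from the identities `λ z₁³ = λ z₁ Q - (t z₁ + z₂) P` and `λ z₂³ = λ z₂ Q - (z₁ + t z₂) P`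
in the coordinates `P = λ z₁ z₂`, `Q = z₁² + t z₁ z₂ + z₂²` of `F_{λ,t}`. -/

open Filter Topology

noncomputable section

theorem le_add_of_tendsto_div_two_pow {a : ℕ → ℝ} {L H : ℝ}
    (ha : ∀ n, a (n + 1) ≤ 2 * a n + L)
    (hH : Tendsto (fun n => a n / 2 ^ n) atTop (𝓝 H)) : H ≤ a 0 + L := by
  have hgrowth : ∀ n, a n + L ≤ 2 ^ n * (a 0 + L) := by
    intro n
    induction n with
    | zero => simp
    | succ n ih => rw [pow_succ]; linarith [ha n]
  have hshift : Tendsto (fun n => (a n + L) / 2 ^ n) atTop (𝓝 H) := by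
    have hL : Tendsto (fun n : ℕ => L / 2 ^ n) atTop (𝓝 0) :=
      tendsto_const_nhds.div_atTop (tendsto_pow_atTop_atTop_of_one_lt one_lt_two)
    simpa [add_div] using hH.add hL
  refine le_of_tendsto hshift (Eventually.of_forall fun n => ?_)
  rw [div_le_iff₀ (by positivity)]
  linarith [hgrowth n]

theorem Real.log_bounds_of_sq_bounds {x y c C : ℝ} (hx : 0 < x) (hc : 0 < c)
    (hlow : c * x ^ 2 ≤ y) (hup : y ≤ C * x ^ 2) :
    2 * Real.log x + Real.log c ≤ Real.log y ∧ Real.log y ≤ 2 * Real.log x + Real.log C := by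
  have hcx : 0 < c * x ^ 2 := by positivity
  have hC : 0 < C := pos_of_mul_pos_left (hcx.trans_le (hlow.trans hup)) (by positivity)
  have hlog : ∀ k : ℝ, 0 < k → Real.log (k * x ^ 2) = 2 * Real.log x + Real.log k := by
    intro k hk
    rw [Real.log_mul hk.ne' (by positivity), Real.log_pow]
    push_cast
    ring
  exact ⟨hlog c hc ▸ Real.log_le_log hcx hlow,
    hlog C hC ▸ Real.log_le_log (hcx.trans_le hlow) hup⟩

section Iterate

variable {E : Type*} [NormedAddCommGroup E] {F : E → E} {c C : ℝ}

theorem iterate_ne_zero_of_mul_sq_le_norm (hc : 0 < c)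
    (hlow : ∀ z, z ≠ 0 → c * ‖z‖ ^ 2 ≤ ‖F z‖) {z : E} (hz : z ≠ 0) (n : ℕ) :
    F^[n] z ≠ 0 := by
  induction n with
  | zero => exact hz
  | succ n ih =>
    rw [Function.iterate_succ_apply', ← norm_pos_iff]
    exact lt_of_lt_of_le (by positivity) (hlow _ ih)

theorem escapeRate_bounds (hc : 0 < c) (hlow : ∀ z, z ≠ 0 → c * ‖z‖ ^ 2 ≤ ‖F z‖)
    (hup : ∀ z, ‖F z‖ ≤ C * ‖z‖ ^ 2) {z₀ : E} (hz₀ : z₀ ≠ 0) {H : ℝ}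
    (hH : Tendsto (fun n : ℕ => Real.log ‖F^[n] z₀‖ / 2 ^ n) atTop (𝓝 H)) :
    Real.log ‖z₀‖ + Real.log c ≤ H ∧ H ≤ Real.log ‖z₀‖ + Real.log C := by
  have hstep : ∀ n, 2 * Real.log ‖F^[n] z₀‖ + Real.log c ≤ Real.log ‖F^[n + 1] z₀‖ ∧
      Real.log ‖F^[n + 1] z₀‖ ≤ 2 * Real.log ‖F^[n] z₀‖ + Real.log C := by
    intro n
    have hn := iterate_ne_zero_of_mul_sq_le_norm hc hlow hz₀ n
    rw [Function.iterate_succ_apply']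
    exact Real.log_bounds_of_sq_bounds (norm_pos_iff.2 hn) hc (hlow _ hn) (hup _)
  constructor
  · have := le_add_of_tendsto_div_two_pow (a := fun n => -Real.log ‖F^[n] z₀‖)
      (L := -Real.log c) (fun n => by linarith [(hstep n).1])
      (by simpa only [neg_div] using hH.neg)
    simp only [Function.iterate_zero_apply] at this
    linarith
  · exact le_add_of_tendsto_div_two_pow (fun n => (hstep n).2) hH

end Iterate

theorem Real.abs_le_two_log_of_log_bounds {c C A H : ℝ} (hc : 0 < c) (hC : 0 < C)
    (hcA : c⁻¹ ≤ A) (hCA : C ≤ A) (hlow : Real.log (c * A⁻¹) ≤ H)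
    (hup : H ≤ Real.log (C * A)) : |H| ≤ 2 * Real.log A := by
  have hA : 0 < A := (inv_pos.2 hc).trans_le hcA
  rw [Real.log_mul hc.ne' (inv_ne_zero hA.ne'), Real.log_inv] at hlow
  rw [Real.log_mul hC.ne' hA.ne'] at hup
  have hlogc : Real.log c⁻¹ ≤ Real.log A := Real.log_le_log (inv_pos.2 hc) hcA
  have hlogC : Real.log C ≤ Real.log A := Real.log_le_log hC hCA
  rw [Real.log_inv] at hlogc
  rw [abs_le]
  constructor <;> linarith

section Fh

variable (lam t : ℂ) (z : ℂ × ℂ)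

theorem norm_Fh_le : ‖Fh lam t z‖ ≤ max ‖lam‖ (‖t‖ + 2) * ‖z‖ ^ 2 := by
  have h₁ : ‖z.1‖ ≤ ‖z‖ := norm_fst_le z
  have h₂ : ‖z.2‖ ≤ ‖z‖ := norm_snd_le z
  have h₁₂ : ‖z.1‖ * ‖z.2‖ ≤ ‖z‖ ^ 2 := by rw [sq]; gcongr
  rw [Fh, Prod.norm_mk]
  refine max_le ?_ ?_
  · calc ‖lam * z.1 * z.2‖ = ‖lam‖ * (‖z.1‖ * ‖z.2‖) := by rw [norm_mul, norm_mul, mul_assoc]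
      _ ≤ max ‖lam‖ (‖t‖ + 2) * ‖z‖ ^ 2 := by gcongr; exact le_max_left _ _
  · calc ‖z.1 ^ 2 + t * z.1 * z.2 + z.2 ^ 2‖
        ≤ ‖z.1‖ ^ 2 + ‖t‖ * (‖z.1‖ * ‖z.2‖) + ‖z.2‖ ^ 2 := by
          refine (norm_add₃_le ..).trans_eq ?_
          rw [norm_pow, norm_pow, norm_mul, norm_mul, mul_assoc]
      _ ≤ ‖z‖ ^ 2 + ‖t‖ * ‖z‖ ^ 2 + ‖z‖ ^ 2 := by gcongr
      _ = (‖t‖ + 2) * ‖z‖ ^ 2 := by ring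
      _ ≤ max ‖lam‖ (‖t‖ + 2) * ‖z‖ ^ 2 := by gcongr; exact le_max_right _ _

theorem mul_norm_sq_le_norm_Fh : ‖lam‖ * ‖z‖ ^ 2 ≤ (‖lam‖ + ‖t‖ + 1) * ‖Fh lam t z‖ := by
  set P := lam * z.1 * z.2
  set Q := z.1 ^ 2 + t * z.1 * z.2 + z.2 ^ 2
  have hP : ‖P‖ ≤ ‖Fh lam t z‖ := norm_fst_le (Fh lam t z)
  have hQ : ‖Q‖ ≤ ‖Fh lam t z‖ := norm_snd_le (Fh lam t z)
  have h₁ : ‖z.1‖ ≤ ‖z‖ := norm_fst_le z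
  have h₂ : ‖z.2‖ ≤ ‖z‖ := norm_snd_le z
  have hcoord : ∀ w u : ℂ, lam * w ^ 3 = lam * w * Q - u * P → ‖w‖ ≤ ‖z‖ →
      ‖u‖ ≤ (‖t‖ + 1) * ‖z‖ → ‖lam‖ * ‖w‖ ^ 3 ≤ (‖lam‖ + ‖t‖ + 1) * ‖z‖ * ‖Fh lam t z‖ := by
    intro w u hid hw hu
    calc ‖lam‖ * ‖w‖ ^ 3 = ‖lam * w * Q - u * P‖ := by rw [← hid, norm_mul, norm_pow]
      _ ≤ ‖lam‖ * ‖w‖ * ‖Q‖ + ‖u‖ * ‖P‖ := by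
          refine (norm_sub_le _ _).trans_eq ?_
          rw [norm_mul, norm_mul, norm_mul]
      _ ≤ ‖lam‖ * ‖z‖ * ‖Fh lam t z‖ + (‖t‖ + 1) * ‖z‖ * ‖Fh lam t z‖ := by gcongr
      _ = (‖lam‖ + ‖t‖ + 1) * ‖z‖ * ‖Fh lam t z‖ := by ring
  have hcube : ‖lam‖ * ‖z‖ ^ 3 ≤ (‖lam‖ + ‖t‖ + 1) * ‖z‖ * ‖Fh lam t z‖ := by
    rcases max_choice ‖z.1‖ ‖z.2‖ with h | h <;> rw [← Prod.norm_def] at h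
    · refine (congrArg (‖lam‖ * · ^ 3) h).trans_le <| hcoord z.1 (t * z.1 + z.2) (by ring) h₁ ?_
      calc ‖t * z.1 + z.2‖ ≤ ‖t‖ * ‖z.1‖ + ‖z.2‖ := (norm_add_le _ _).trans_eq (by rw [norm_mul])
        _ ≤ (‖t‖ + 1) * ‖z‖ := by rw [add_one_mul]; gcongr
    · refine (congrArg (‖lam‖ * · ^ 3) h).trans_le <| hcoord z.2 (z.1 + t * z.2) (by ring) h₂ ?_
      calc ‖z.1 + t * z.2‖ ≤ ‖z.1‖ + ‖t‖ * ‖z.2‖ := (norm_add_le _ _).trans_eq (by rw [norm_mul])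
        _ ≤ (‖t‖ + 1) * ‖z‖ := by rw [add_one_mul, add_comm]; gcongr
  rcases (norm_nonneg z).eq_or_lt with hz | hz
  · rw [← hz, zero_pow two_ne_zero, mul_zero]
    positivity
  · nlinarith

end Fh

theorem exists_norm_Fh_bounds {lam : ℂ} (hlam : lam ≠ 0) :
    ∃ c > (0 : ℝ), ∃ C > (0 : ℝ), ∀ t : ℂ, 1 ≤ ‖t‖ → ∀ z : ℂ × ℂ,
      c * ‖t‖⁻¹ * ‖z‖ ^ 2 ≤ ‖Fh lam t z‖ ∧ ‖Fh lam t z‖ ≤ C * ‖t‖ * ‖z‖ ^ 2 := by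
  have hlam' : 0 < ‖lam‖ := norm_pos_iff.2 hlam
  refine ⟨‖lam‖ / (‖lam‖ + 2), by positivity, ‖lam‖ + 3, by positivity, fun t ht z => ⟨?_, ?_⟩⟩
  · have ht' : ‖lam‖ + ‖t‖ + 1 ≤ (‖lam‖ + 2) * ‖t‖ := by nlinarith
    have hrw : ‖lam‖ / (‖lam‖ + 2) * ‖t‖⁻¹ * ‖z‖ ^ 2
        = ‖lam‖ * ‖z‖ ^ 2 / ((‖lam‖ + 2) * ‖t‖) := by field_simp
    rw [hrw, div_le_iff₀ (by positivity)]
    calc ‖lam‖ * ‖z‖ ^ 2 ≤ (‖lam‖ + ‖t‖ + 1) * ‖Fh lam t z‖ := mul_norm_sq_le_norm_Fh lam t z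
      _ ≤ ‖Fh lam t z‖ * ((‖lam‖ + 2) * ‖t‖) := by rw [mul_comm]; gcongr
  · calc ‖Fh lam t z‖ ≤ max ‖lam‖ (‖t‖ + 2) * ‖z‖ ^ 2 := norm_Fh_le lam t z
      _ ≤ (‖lam‖ + 3) * ‖t‖ * ‖z‖ ^ 2 := by
        gcongr
        refine max_le (by nlinarith) (by nlinarith)

/-- For each `λ ≠ 0` there are constants `c, C > 0` with
`c |t|⁻¹ ‖z‖² ≤ ‖F_{λ,t}(z)‖ ≤ C |t| ‖z‖²` for all `|t| ≥ 1` and `z ≠ 0`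
(the norm on `ℂ²` being the sup norm `‖(a,b)‖ = max (|a|, |b|)`).
Consequently the escape rates `H⁺_λ(t) = lim 2⁻ⁿ log ‖F_{λ,t}ⁿ(1,1)‖` and
`H⁻_λ(t) = lim 2⁻ⁿ log ‖F_{λ,t}ⁿ(-1,1)‖` satisfy `|H^±_λ(t)| ≤ 3 log |t|`
for all `t` with `|t| ≥ R`, for some `R > 1`; in particular
`H^±_λ(t) = O(log |t|)` as `t → ∞`. -/
theorem escape_rate_log_bound (lam : ℂ) (hlam : lam ≠ 0) (Hp Hm : ℂ → ℝ)
    (hHp : ∀ t : ℂ, Tendsto (fun n : ℕ => Real.log ‖(Fh lam t)^[n] (1, 1)‖ / 2 ^ n)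
      atTop (𝓝 (Hp t)))
    (hHm : ∀ t : ℂ, Tendsto (fun n : ℕ => Real.log ‖(Fh lam t)^[n] (-1, 1)‖ / 2 ^ n)
      atTop (𝓝 (Hm t))) :
    (∃ c > (0 : ℝ), ∃ C > (0 : ℝ), ∀ t : ℂ, 1 ≤ ‖t‖ → ∀ z : ℂ × ℂ, z ≠ 0 →
      c * (‖t‖)⁻¹ * ‖z‖ ^ 2 ≤ ‖Fh lam t z‖ ∧
        ‖Fh lam t z‖ ≤ C * ‖t‖ * ‖z‖ ^ 2) ∧
    ∃ R > (1 : ℝ), ∀ t : ℂ, R ≤ ‖t‖ →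
      |Hp t| ≤ 3 * Real.log (‖t‖) ∧ |Hm t| ≤ 3 * Real.log (‖t‖) := by
  obtain ⟨c, hc, C, hC, hF⟩ := exists_norm_Fh_bounds hlam
  refine ⟨⟨c, hc, C, hC, fun t ht z _ => hF t ht z⟩, max 2 (max C c⁻¹),
    one_lt_two.trans_le (le_max_left _ _), fun t ht => ?_⟩
  obtain ⟨h2t, hCt, hct⟩ : 2 ≤ ‖t‖ ∧ C ≤ ‖t‖ ∧ c⁻¹ ≤ ‖t‖ := by
    simpa only [max_le_iff] using ht
  have hlog : 0 ≤ Real.log ‖t‖ := Real.log_nonneg (by linarith)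
  have hbound : ∀ z₀ : ℂ × ℂ, ‖z₀‖ = 1 → ∀ H : ℝ,
      Tendsto (fun n : ℕ => Real.log ‖(Fh lam t)^[n] z₀‖ / 2 ^ n) atTop (𝓝 H) →
      |H| ≤ 3 * Real.log ‖t‖ := by
    intro z₀ hz₀ H hH
    have hF' := hF t (by linarith)
    obtain ⟨hlow, hup⟩ := escapeRate_bounds (by positivity) (fun z _ => (hF' z).1)
      (fun z => (hF' z).2) (norm_ne_zero_iff.1 (by simp [hz₀])) hH
    rw [hz₀, Real.log_one, zero_add] at hlow hup
    linarith [Real.abs_le_two_log_of_log_bounds hc hC hct hCt hlow hup]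
  exact ⟨hbound _ (by simp [Prod.norm_def]) _ (hHp t),
    hbound _ (by simp [Prod.norm_def]) _ (hHm t)⟩
end
end

section
/- For every λ ∈ ℂ ∖ {0}: H⁺_λ(λ − 2) = log|λ|, and H⁻_λ(λ − 2) = (1/2)·G_M(λ/2 − λ²/4) + log 2. -/
/-!
At `t = λ - 2` the map `F = F_{λ,t}` satisfies `F(1,1) = λ·(1,1)`, and `F` is homogeneous of
degree 2, so `F^n(1,1) = λ^(2^n - 1)·(1,1)` and `H⁺ = log |λ|`.

The line `z₂ - z₁ = 1`, parametrised as `q ↦ (q/λ - 1/2, q/λ + 1/2)`, is invariant under `F`,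
which acts on it as `p_c` with `c = λ/2 - λ²/4`. Since `(-1,1)` is twice the point `q = 0`,
`F^n(-1,1) = 2^(2^n)·(p_cⁿ(0)/λ - 1/2, p_cⁿ(0)/λ + 1/2)`, and the norm of the second factor is
comparable to `max(|p_cⁿ(0)|, 1)`. Hence `H⁻ = log 2 + G_M(c)/2`, the factor `1/2` coming from
`p_cⁿ(0) = p_c^(n-1)(c)`.
-/

open Filter Topology

noncomputable section

open Function Real

theorem Filter.Tendsto.div_of_abs_sub_le {α : Type*} {l : Filter α} {a b d : α → ℝ} {C L : ℝ}
    (hb : Tendsto (fun x => b x / d x) l (𝓝 L)) (hab : ∀ᶠ x in l, |a x - b x| ≤ C)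
    (hd : Tendsto d l atTop) : Tendsto (fun x => a x / d x) l (𝓝 L) := by
  have hdiff : Tendsto (fun x => (a x - b x) / d x) l (𝓝 0) :=
    tendsto_bdd_div_atTop_nhds_zero (hab.mono fun _ => neg_le_of_abs_le)
      (hab.mono fun _ => le_of_abs_le) hd
  simpa only [add_zero, ← add_div, add_sub_cancel] using hb.add hdiff

theorem Real.abs_log_sub_log_le_log {x y K : ℝ} (hx : 0 < x) (hy : 0 < y)
    (hxy : x ≤ K * y) (hyx : y ≤ K * x) : |log x - log y| ≤ log K := by
  have hK : 0 < K := pos_of_mul_pos_left (hx.trans_le hxy) hy.le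
  rw [abs_sub_le_iff]
  constructor
  · linarith [log_le_log hx hxy, log_mul hK.ne' hy.ne']
  · linarith [log_le_log hy hyx, log_mul hK.ne' hx.ne']

theorem Fh_smul (lam t k : ℂ) (z : ℂ × ℂ) : Fh lam t (k • z) = k ^ 2 • Fh lam t z := by
  simp only [Fh, Prod.smul_fst, Prod.smul_snd, smul_eq_mul, Prod.smul_mk, Prod.mk.injEq]
  constructor <;> ring

theorem Fh_iterate_smul (lam t : ℂ) (n : ℕ) (k : ℂ) (z : ℂ × ℂ) :
    (Fh lam t)^[n] (k • z) = k ^ 2 ^ n • (Fh lam t)^[n] z := by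
  induction n generalizing k z with
  | zero => simp
  | succ n ih => rw [iterate_succ_apply, iterate_succ_apply, Fh_smul, ih, ← pow_mul, ← pow_succ']

theorem Fh_iterate_one_one (lam : ℂ) (n : ℕ) :
    (Fh lam (lam - 2))^[n] (1, 1) = lam ^ (2 ^ n - 1) • (1, 1) := by
  induction n with
  | zero => simp
  | succ n ih =>
    have hfix : Fh lam (lam - 2) (1, 1) = lam • (1, 1) := by
      simp only [Fh, Prod.smul_mk, smul_eq_mul, Prod.mk.injEq]
      constructor <;> ring
    have hexp : 2 ^ n + (2 ^ n - 1) = 2 ^ (n + 1) - 1 := by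
      have := Nat.one_le_two_pow (n := n)
      rw [pow_succ]
      omega
    rw [iterate_succ_apply, hfix, Fh_iterate_smul, ih, smul_smul, ← pow_add, hexp]

theorem tendsto_log_norm_Fh_iterate_one_one (lam : ℂ) :
    Tendsto (fun n : ℕ => log ‖(Fh lam (lam - 2))^[n] (1, 1)‖ / 2 ^ n) atTop
      (𝓝 (log ‖lam‖)) := by
  have hlog (n : ℕ) : log ‖(Fh lam (lam - 2))^[n] (1, 1)‖ = (2 ^ n - 1) * log ‖lam‖ := by
    have := Nat.one_le_two_pow (n := n)
    simp [Fh_iterate_one_one, Prod.norm_def, log_pow, Nat.cast_sub this]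
  refine Tendsto.div_of_abs_sub_le (b := fun n => 2 ^ n * log ‖lam‖) (C := |log ‖lam‖|)
    (tendsto_const_nhds.congr fun n => by field_simp) (Eventually.of_forall fun n => ?_)
    (tendsto_pow_atTop_atTop_of_one_lt one_lt_two)
  rw [hlog, show (2 ^ n - 1) * log ‖lam‖ - 2 ^ n * log ‖lam‖ = -log ‖lam‖ by ring, abs_neg]

def lineEmb (lam q : ℂ) : ℂ × ℂ := (q / lam - 1 / 2, q / lam + 1 / 2)

section lineEmb

variable {lam : ℂ}

theorem Fh_lineEmb (hlam : lam ≠ 0) (q : ℂ) :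
    Fh lam (lam - 2) (lineEmb lam q) = lineEmb lam (q ^ 2 + (lam / 2 - lam ^ 2 / 4)) := by
  simp only [Fh, lineEmb, Prod.mk.injEq]
  constructor <;> field_simp <;> ring

theorem Fh_iterate_neg_one_one (hlam : lam ≠ 0) (n : ℕ) :
    (Fh lam (lam - 2))^[n] (-1, 1) =
      (2 : ℂ) ^ 2 ^ n • lineEmb lam ((fun z => z ^ 2 + (lam / 2 - lam ^ 2 / 4))^[n] 0) := by
  have hstart : ((-1, 1) : ℂ × ℂ) = (2 : ℂ) • lineEmb lam 0 := by
    simp only [lineEmb, Prod.smul_mk, smul_eq_mul, Prod.mk.injEq]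
    norm_num
  have hsemi : Semiconj (lineEmb lam) (fun z => z ^ 2 + (lam / 2 - lam ^ 2 / 4))
      (Fh lam (lam - 2)) := fun q => (Fh_lineEmb hlam q).symm
  rw [hstart, Fh_iterate_smul, (hsemi.iterate_right n).eq]

theorem one_half_le_norm_lineEmb (q : ℂ) : 1 / 2 ≤ ‖lineEmb lam q‖ := by
  have h : (1 : ℝ) = ‖(lineEmb lam q).2 - (lineEmb lam q).1‖ := by simp [lineEmb]; norm_num
  linarith [norm_sub_le (lineEmb lam q).2 (lineEmb lam q).1, norm_fst_le (lineEmb lam q),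
    norm_snd_le (lineEmb lam q)]

theorem norm_le_mul_norm_lineEmb (hlam : lam ≠ 0) (q : ℂ) : ‖q‖ ≤ ‖lam‖ * ‖lineEmb lam q‖ := by
  have h : q = lam / 2 * ((lineEmb lam q).1 + (lineEmb lam q).2) := by
    simp only [lineEmb]; field_simp; ring
  calc ‖q‖ = ‖lam‖ / 2 * ‖(lineEmb lam q).1 + (lineEmb lam q).2‖ := by
        conv_lhs => rw [h]
        simp
    _ ≤ ‖lam‖ / 2 * (2 * ‖lineEmb lam q‖) := by
        gcongr
        linarith [norm_add_le (lineEmb lam q).1 (lineEmb lam q).2, norm_fst_le (lineEmb lam q),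
          norm_snd_le (lineEmb lam q)]
    _ = ‖lam‖ * ‖lineEmb lam q‖ := by ring

theorem norm_lineEmb_le (q : ℂ) : ‖lineEmb lam q‖ ≤ ‖q‖ / ‖lam‖ + 1 / 2 := by
  refine max_le ?_ ?_
  · simpa [lineEmb, norm_div] using norm_sub_le (q / lam) (1 / 2)
  · simpa [lineEmb, norm_div] using norm_add_le (q / lam) (1 / 2)

theorem abs_log_norm_lineEmb_sub_le (hlam : lam ≠ 0) (q : ℂ) :
    |log ‖lineEmb lam q‖ - log (max ‖q‖ 1)| ≤ log (2 + ‖lam‖ + ‖lam‖⁻¹) := by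
  have hhalf := one_half_le_norm_lineEmb (lam := lam) q
  have hm : 1 ≤ max ‖q‖ 1 := le_max_right _ _
  refine abs_log_sub_log_le_log (by linarith) (by linarith) ?_ ?_
  · calc ‖lineEmb lam q‖ ≤ ‖lam‖⁻¹ * ‖q‖ + 1 / 2 := by
          simpa [div_eq_inv_mul] using norm_lineEmb_le (lam := lam) q
      _ ≤ ‖lam‖⁻¹ * max ‖q‖ 1 + 2 * max ‖q‖ 1 := by
          gcongr
          · exact le_max_left _ _
          · linarith
      _ ≤ (2 + ‖lam‖ + ‖lam‖⁻¹) * max ‖q‖ 1 := by nlinarith [norm_nonneg lam]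
  · calc max ‖q‖ 1 ≤ ‖lam‖ * ‖lineEmb lam q‖ + 2 * ‖lineEmb lam q‖ :=
          max_le (by linarith [norm_le_mul_norm_lineEmb hlam q, norm_nonneg lam])
            (by nlinarith [norm_nonneg lam])
      _ ≤ (2 + ‖lam‖ + ‖lam‖⁻¹) * ‖lineEmb lam q‖ := by
          nlinarith [inv_nonneg.mpr (norm_nonneg lam), norm_nonneg (lineEmb lam q)]

theorem tendsto_log_norm_Fh_iterate_neg_one_one (hlam : lam ≠ 0) {G : ℝ}
    (hG : Tendsto (fun n : ℕ =>
      log (max ‖(fun z : ℂ => z ^ 2 + (lam / 2 - lam ^ 2 / 4))^[n] (lam / 2 - lam ^ 2 / 4)‖ 1)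
        / 2 ^ n) atTop (𝓝 G)) :
    Tendsto (fun n : ℕ => log ‖(Fh lam (lam - 2))^[n] (-1, 1)‖ / 2 ^ n) atTop
      (𝓝 (log 2 + G / 2)) := by
  set p := fun z : ℂ => z ^ 2 + (lam / 2 - lam ^ 2 / 4)
  have horbit : Tendsto (fun n : ℕ => log (max ‖p^[n] 0‖ 1) / 2 ^ n) atTop (𝓝 (G / 2)) := by
    have hp0 : p 0 = lam / 2 - lam ^ 2 / 4 := by simp [p]
    refine (tendsto_add_atTop_iff_nat 1).mp ((hG.div_const 2).congr fun n => ?_)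
    rw [iterate_succ_apply, hp0, pow_succ (2 : ℝ) n, div_div]
  have hline : Tendsto (fun n : ℕ => log ‖lineEmb lam (p^[n] 0)‖ / 2 ^ n) atTop (𝓝 (G / 2)) :=
    horbit.div_of_abs_sub_le (Eventually.of_forall fun _ => abs_log_norm_lineEmb_sub_le hlam _)
      (tendsto_pow_atTop_atTop_of_one_lt one_lt_two)
  refine (hline.const_add (log 2)).congr fun n => ?_
  have hpos : 0 < ‖lineEmb lam (p^[n] 0)‖ := by
    linarith [one_half_le_norm_lineEmb (lam := lam) (p^[n] 0)]
  rw [Fh_iterate_neg_one_one hlam, norm_smul, log_mul (by simp) hpos.ne', norm_pow,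
    Complex.norm_two, log_pow]
  field_simp
  push_cast
  ring

end lineEmb

/-- For every `λ ≠ 0`: `H⁺_λ(λ-2) = log |λ|` and
`H⁻_λ(λ-2) = (1/2)·G_M(λ/2 - λ²/4) + log 2`, where `H^±_λ` are the escape
rates of the critical points `±1` and `G_M(c) = lim 2⁻ⁿ log⁺ |p_cⁿ(c)|`
(with `p_c(z) = z² + c`) is the Green's function of the Mandelbrot set. -/
theorem escape_rates_at_polynomial_parameter (lam : ℂ) (hlam : lam ≠ 0)
    (Hp Hm : ℂ → ℝ) (GM : ℂ → ℝ)
    (hHp : ∀ t : ℂ, Tendsto (fun n : ℕ => Real.log ‖(Fh lam t)^[n] (1, 1)‖ / 2 ^ n)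
      atTop (𝓝 (Hp t)))
    (hHm : ∀ t : ℂ, Tendsto (fun n : ℕ => Real.log ‖(Fh lam t)^[n] (-1, 1)‖ / 2 ^ n)
      atTop (𝓝 (Hm t)))
    (hGM : ∀ c : ℂ, Tendsto
      (fun n : ℕ => Real.log (max ‖(fun z : ℂ => z ^ 2 + c)^[n] c‖ 1) / 2 ^ n)
      atTop (𝓝 (GM c))) :
    Hp (lam - 2) = Real.log ‖lam‖ ∧
      Hm (lam - 2) = (1 / 2) * GM (lam / 2 - lam ^ 2 / 4) + Real.log 2 := by
  refine ⟨tendsto_nhds_unique (hHp _) (tendsto_log_norm_Fh_iterate_one_one lam), ?_⟩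
  rw [tendsto_nhds_unique (hHm _) (tendsto_log_norm_Fh_iterate_neg_one_one hlam (hGM _))]
  ring
end
end

section
/- For every real number c > 1/4, one has G_M(c) > log c. In fact G_M(c) ≥ (1/2) log(c² + c) > log c for all real c > 1/4. -/
/-!
On `[0, ∞)` one has `p_c(x) ≥ x²` for `c ≥ 0`, so the real orbit of `c > 0` satisfies
`p_cⁿ⁺¹(c) ≥ (c² + c)^(2ⁿ)`; taking `2^-(n+1) log⁺` and passing to the limit gives
`G_M(c) ≥ ½ log(c² + c)`, which exceeds `log c` because `c² + c > c²`.
-/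

open Filter Topology

lemma Complex.iterate_sq_add_ofReal (c x : ℝ) (n : ℕ) :
    (fun z : ℂ => z ^ 2 + c)^[n] x = ((fun y : ℝ => y ^ 2 + c)^[n] x : ℝ) := by
  have hsemiconj : Function.Semiconj ((↑) : ℝ → ℂ) (fun y => y ^ 2 + c) (fun z => z ^ 2 + c) :=
    fun y => by push_cast; rfl
  exact (hsemiconj.iterate_right n x).symm

lemma pow_two_pow_le_iterate_sq_add {c x : ℝ} (hc : 0 ≤ c) (hx : 0 ≤ x) (n : ℕ) :
    x ^ 2 ^ n ≤ (fun y : ℝ => y ^ 2 + c)^[n] x := by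
  induction n with
  | zero => simp
  | succ n ih =>
    rw [Function.iterate_succ_apply', pow_succ, pow_mul]
    nlinarith [pow_le_pow_left₀ (by positivity) ih 2]

lemma mul_log_le_log_max_one {a b : ℝ} {k : ℕ} (ha : 0 < a) (hab : a ^ k ≤ b) :
    k * Real.log a ≤ Real.log (max b 1) := calc
  k * Real.log a = Real.log (a ^ k) := (Real.log_pow a k).symm
  _ ≤ Real.log b := Real.log_le_log (by positivity) hab
  _ ≤ Real.log (max b 1) := Real.log_le_log ((pow_pos ha k).trans_le hab) (le_max_left b 1)

lemma half_log_sq_add_self_le {c : ℝ} (hc : 0 < c) (n : ℕ) :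
    1 / 2 * Real.log (c ^ 2 + c) ≤
      Real.log (max ‖(fun z : ℂ => z ^ 2 + c)^[n + 1] c‖ 1) / 2 ^ (n + 1) := by
  have horbit : (c ^ 2 + c) ^ 2 ^ n ≤ (fun y : ℝ => y ^ 2 + c)^[n + 1] c := by
    rw [Function.iterate_succ_apply]
    exact pow_two_pow_le_iterate_sq_add hc.le (by positivity) n
  have hnorm : ‖(fun z : ℂ => z ^ 2 + c)^[n + 1] c‖ = (fun y : ℝ => y ^ 2 + c)^[n + 1] c := by
    rw [Complex.iterate_sq_add_ofReal, Complex.norm_real, Real.norm_eq_abs,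
      abs_of_nonneg (le_trans (by positivity) horbit)]
  rw [hnorm, le_div_iff₀ (by positivity)]
  calc 1 / 2 * Real.log (c ^ 2 + c) * 2 ^ (n + 1) = ((2 ^ n : ℕ) : ℝ) * Real.log (c ^ 2 + c) := by
        push_cast; ring
    _ ≤ _ := mul_log_le_log_max_one (by positivity) horbit

lemma log_lt_half_log_sq_add_self {c : ℝ} (hc : 0 < c) :
    Real.log c < 1 / 2 * Real.log (c ^ 2 + c) := by
  have h : Real.log (c ^ 2) < Real.log (c ^ 2 + c) :=
    Real.log_lt_log (by positivity) (by linarith)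
  rw [Real.log_pow] at h
  push_cast at h
  linarith

/-- For every real `c > 1/4` one has `G_M(c) ≥ (1/2) log(c² + c) > log c`,
where `G_M(c) = lim 2⁻ⁿ log⁺ |p_cⁿ(c)|` (with `p_c(z) = z² + c`) is the
Green's function of the Mandelbrot set. -/
theorem green_function_bound_on_real_axis (GM : ℂ → ℝ)
    (hGM : ∀ c : ℂ, Tendsto
      (fun n : ℕ => Real.log (max ‖(fun z : ℂ => z ^ 2 + c)^[n] c‖ 1) / 2 ^ n)
      atTop (𝓝 (GM c))) :
    ∀ c : ℝ, 1 / 4 < c →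
      (1 / 2) * Real.log (c ^ 2 + c) ≤ GM (c : ℂ) ∧
        Real.log c < (1 / 2) * Real.log (c ^ 2 + c) := by
  intro c hc
  have hc0 : 0 < c := by linarith
  exact ⟨ge_of_tendsto' ((hGM c).comp (tendsto_add_atTop_nat 1)) (half_log_sq_add_self_le hc0),
    log_lt_half_log_sq_add_self hc0⟩
end

section
/- Fix λ ∈ ℂ ∖ {0}. For every n ≥ 1, the polynomials P_n and Q_n have no common root in ℂ. If moreover 1 + λ + ⋯ + λ^j ≠ 0 for every integer j ≥ 1 (for instance if λ is not a root of unity), then deg P_n = 2^{n−1} − 1 and deg Q_n = 2^{n−1} for every n ≥ 1. -/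
/-!
`F_{λ,t}` is the evaluation at `t` of the polynomial map
`(p, q) ↦ (λ p q, p² + X p q + q²)` on `ℂ[X]²`, so `(P_n, Q_n)` are its iterates at `(1, 1)`.
For `λ ≠ 0`, `F_{λ,t}` vanishes only at the origin, so the orbit of `(1, 1)` never reaches it.
For the degrees, write `a, b` for the leading coefficients of `P_n, Q_n`. The leading terms
give `a ↦ λ a b` and `b ↦ b (a + b)` (the `P²` term has too small a degree), and
`(1 + ⋯ + λ^(n-1)) a = λⁿ b` is invariant. Hence `(1 + ⋯ + λ^(n-1)) (a + b) = (1 + ⋯ + λⁿ) b`,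
so `b (a + b) ≠ 0` and the top coefficient of `Q_{n+1}` does not cancel.
-/

open Filter Topology

noncomputable section

theorem eq_zero_of_Fh_eq_zero {lam t : ℂ} (hlam : lam ≠ 0) {z : ℂ × ℂ} (h : Fh lam t z = 0) :
    z = 0 := by
  obtain ⟨h₁, h₂⟩ := Prod.ext_iff.1 h
  simp only [Fh, Prod.fst_zero, Prod.snd_zero, mul_eq_zero, hlam, false_or] at h₁ h₂
  rcases h₁ with h₁ | h₁ <;> simp_all [Prod.ext_iff]

theorem Fh_iterate_ne_zero {lam : ℂ} (hlam : lam ≠ 0) (t : ℂ) {z : ℂ × ℂ} (hz : z ≠ 0) (n : ℕ) :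
    (Fh lam t)^[n] z ≠ 0 := by
  induction n with
  | zero => exact hz
  | succ n ih =>
    rw [Function.iterate_succ_apply']
    exact fun h ↦ ih (eq_zero_of_Fh_eq_zero hlam h)

open Polynomial

section PolynomialLift

variable {R : Type*}

def FhPoly [CommRing R] (lam : R) (z : R[X] × R[X]) : R[X] × R[X] :=
  (C lam * z.1 * z.2, z.1 ^ 2 + X * z.1 * z.2 + z.2 ^ 2)

theorem semiconj_eval_FhPoly (lam t : ℂ) :
    Function.Semiconj (Prod.map (eval t) (eval t)) (FhPoly lam) (Fh lam t) := by
  intro z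
  simp [FhPoly, Fh]

theorem natDegree_sq_add_X_mul_mul_add_sq_le [CommSemiring R] {p q : R[X]}
    (h : p.natDegree < q.natDegree) :
    (p ^ 2 + X * p * q + q ^ 2).natDegree ≤ 2 * q.natDegree := by
  have hp : (p ^ 2).natDegree ≤ 2 * q.natDegree := natDegree_pow_le.trans (by omega)
  have hXpq : (X * p * q).natDegree ≤ 2 * q.natDegree :=
    calc (X * p * q).natDegree ≤ (X * p).natDegree + q.natDegree := natDegree_mul_le
      _ ≤ 1 + p.natDegree + q.natDegree := by
        gcongr; exact natDegree_mul_le.trans (by gcongr; exact natDegree_X_le)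
      _ ≤ 2 * q.natDegree := by omega
  have hq : (q ^ 2).natDegree ≤ 2 * q.natDegree := natDegree_pow_le
  exact natDegree_add_le_of_degree_le (natDegree_add_le_of_degree_le hp hXpq) hq

theorem coeff_sq_add_X_mul_mul_add_sq [CommSemiring R] {p q : R[X]}
    (h : p.natDegree + 1 = q.natDegree) :
    (p ^ 2 + X * p * q + q ^ 2).coeff (2 * q.natDegree) =
      q.leadingCoeff * (p.leadingCoeff + q.leadingCoeff) := by
  have hp : (p ^ 2).coeff (2 * q.natDegree) = 0 :=
    coeff_eq_zero_of_natDegree_lt (natDegree_pow_le.trans_lt (by omega))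
  have hXpq : (X * p * q).coeff (2 * q.natDegree) = p.leadingCoeff * q.leadingCoeff := by
    rw [mul_assoc, show 2 * q.natDegree = p.natDegree + q.natDegree + 1 by omega, coeff_X_mul,
      coeff_mul_degree_add_degree]
  have hq : (q ^ 2).coeff (2 * q.natDegree) = q.leadingCoeff ^ 2 := by
    rw [sq, sq, two_mul, coeff_mul_degree_add_degree]
  rw [coeff_add, coeff_add, hp, hXpq, hq]
  ring

theorem natDegree_sq_add_X_mul_mul_add_sq [CommSemiring R] {p q : R[X]}
    (h : p.natDegree + 1 = q.natDegree)
    (hc : q.leadingCoeff * (p.leadingCoeff + q.leadingCoeff) ≠ 0) :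
    (p ^ 2 + X * p * q + q ^ 2).natDegree = 2 * q.natDegree := by
  refine natDegree_eq_of_le_of_coeff_ne_zero (natDegree_sq_add_X_mul_mul_add_sq_le (by omega)) ?_
  rwa [coeff_sq_add_X_mul_mul_add_sq h]

theorem FhPoly_leading_step [CommRing R] [IsDomain R] {lam s : R} {k : ℕ} {z : R[X] × R[X]}
    (hlam : lam ≠ 0) (hdeg : z.1.natDegree + 1 = z.2.natDegree) (hz : z.2 ≠ 0)
    (hlc : s * z.1.leadingCoeff = lam ^ k * z.2.leadingCoeff) (hs : s + lam ^ k ≠ 0) :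
    (FhPoly lam z).1.natDegree + 1 = (FhPoly lam z).2.natDegree ∧
      (FhPoly lam z).2.natDegree = 2 * z.2.natDegree ∧ (FhPoly lam z).2 ≠ 0 ∧
      (s + lam ^ k) * (FhPoly lam z).1.leadingCoeff =
        lam ^ (k + 1) * (FhPoly lam z).2.leadingCoeff := by
  obtain ⟨p, q⟩ := z
  dsimp only at hdeg hz hlc ⊢
  set a := p.leadingCoeff
  set b := q.leadingCoeff
  have hb : b ≠ 0 := leadingCoeff_ne_zero.2 hz
  have ha : a ≠ 0 := by
    rintro ha
    simp [ha, hb, hlam] at hlc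
  have hp : p ≠ 0 := leadingCoeff_ne_zero.1 ha
  have hab : b * (a + b) ≠ 0 := by
    have : s * (a + b) = (s + lam ^ k) * b := by linear_combination hlc
    exact mul_ne_zero hb fun h ↦ mul_ne_zero hs hb (by rw [← this, h, mul_zero])
  have hdeg₂ := natDegree_sq_add_X_mul_mul_add_sq hdeg hab
  have hlc₂ : (p ^ 2 + X * p * q + q ^ 2).leadingCoeff = b * (a + b) := by
    rw [leadingCoeff, hdeg₂, coeff_sq_add_X_mul_mul_add_sq hdeg]
  simp only [FhPoly]
  refine ⟨?_, hdeg₂, ?_, ?_⟩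
  · rw [hdeg₂, natDegree_mul (by simpa using ⟨hlam, hp⟩) hz, natDegree_C_mul hlam]
    omega
  · exact leadingCoeff_ne_zero.1 (hlc₂ ▸ hab)
  · rw [hlc₂, leadingCoeff_mul, leadingCoeff_mul, leadingCoeff_C]
    linear_combination lam * b * hlc

theorem FhPoly_one_one [CommRing R] (lam : R) : FhPoly lam (1, 1) = (C lam, X + C 2) := by
  simp only [FhPoly, Prod.mk.injEq, mul_one, one_pow, true_and]
  rw [C_ofNat]
  ring

theorem FhPoly_iterate_natDegree_leadingCoeff [CommRing R] [IsDomain R] {lam : R} (hlam : lam ≠ 0)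
    (hS : ∀ j, 1 ≤ j → ∑ i ∈ Finset.range (j + 1), lam ^ i ≠ 0) (m : ℕ) :
    ((FhPoly lam)^[m + 1] (1, 1)).1.natDegree + 1 = ((FhPoly lam)^[m + 1] (1, 1)).2.natDegree ∧
      ((FhPoly lam)^[m + 1] (1, 1)).2.natDegree = 2 ^ m ∧ ((FhPoly lam)^[m + 1] (1, 1)).2 ≠ 0 ∧
      (∑ i ∈ Finset.range (m + 1), lam ^ i) * ((FhPoly lam)^[m + 1] (1, 1)).1.leadingCoeff =
        lam ^ (m + 1) * ((FhPoly lam)^[m + 1] (1, 1)).2.leadingCoeff := by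
  induction m with
  | zero =>
    simp [FhPoly_one_one, X_add_C_ne_zero, leadingCoeff_X_add_C]
  | succ m ih =>
    obtain ⟨hdeg, hdeg₂, hz, hlc⟩ := ih
    rw [Function.iterate_succ_apply', Finset.sum_range_succ (lam ^ ·) (m + 1), pow_succ 2,
      mul_comm _ 2, ← hdeg₂]
    exact FhPoly_leading_step hlam hdeg hz hlc
      (Finset.sum_range_succ (lam ^ ·) (m + 1) ▸ hS (m + 1) (by omega))

end PolynomialLift

/-- Fix `λ ≠ 0` and let `P_n, Q_n ∈ ℂ[t]` be the polynomials with
`F_{λ,t}ⁿ(1,1) = (P_n(t), Q_n(t))`.  For every `n ≥ 1` the polynomials `P_n`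
and `Q_n` have no common root in `ℂ`; and if moreover `1 + λ + ⋯ + λʲ ≠ 0`
for every `j ≥ 1` (e.g. if `λ` is not a root of unity), then
`deg P_n = 2^(n-1) - 1` and `deg Q_n = 2^(n-1)` for every `n ≥ 1`. -/
theorem Pn_Qn_coprime_and_degrees (lam : ℂ) (hlam : lam ≠ 0)
    (P Q : ℕ → Polynomial ℂ)
    (hPQ : ∀ (n : ℕ) (t : ℂ), (Fh lam t)^[n] (1, 1) = ((P n).eval t, (Q n).eval t)) :
    (∀ n : ℕ, 1 ≤ n → ∀ t : ℂ, ¬((P n).eval t = 0 ∧ (Q n).eval t = 0)) ∧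
      ((∀ j : ℕ, 1 ≤ j → ∑ i ∈ Finset.range (j + 1), lam ^ i ≠ 0) →
        ∀ n : ℕ, 1 ≤ n →
          (P n).natDegree = 2 ^ (n - 1) - 1 ∧ (Q n).natDegree = 2 ^ (n - 1)) := by
  have hlift (n : ℕ) :
      P n = ((FhPoly lam)^[n] (1, 1)).1 ∧ Q n = ((FhPoly lam)^[n] (1, 1)).2 := by
    have h (t : ℂ) :
        Prod.map (eval t) (eval t) ((FhPoly lam)^[n] (1, 1)) = ((P n).eval t, (Q n).eval t) := by
      rw [(semiconj_eval_FhPoly lam t).iterate_right n (1, 1), ← hPQ]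
      simp
    exact ⟨funext fun t ↦ (Prod.ext_iff.1 (h t)).1.symm,
      funext fun t ↦ (Prod.ext_iff.1 (h t)).2.symm⟩
  refine ⟨fun n _ t ⟨hp, hq⟩ ↦ ?_, fun hS n hn ↦ ?_⟩
  · refine Fh_iterate_ne_zero hlam t (z := (1, 1)) (by simp) n ?_
    rw [hPQ, hp, hq, Prod.zero_eq_mk]
  · obtain ⟨m, rfl⟩ := Nat.exists_eq_add_of_le' hn
    obtain ⟨hdeg, hdeg₂, -⟩ := FhPoly_iterate_natDegree_leadingCoeff hlam hS m
    rw [(hlift _).1, (hlift _).2, Nat.add_sub_cancel]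
    omega
end
end

section
/- For every λ ∈ ℂ and every n ≥ 3: the coefficient of t^{2^{n−1}−1} in P_n equals B_n(λ) = λⁿ ∏_{j=1}^{n−2} (1 + λ + ⋯ + λ^j)^{2^{n−2−j}}, and the coefficient of t^{2^{n−1}} in Q_n equals C_n(λ) = (1 + λ + ⋯ + λ^{n−1}) ∏_{j=1}^{n−2} (1 + λ + ⋯ + λ^j)^{2^{n−2−j}}. -/
open Filter Topology

noncomputable section

/-!
Treat `t` as an indeterminate. If `deg P_n ≤ e` and `deg Q_n ≤ e + 1`, then
`deg P_{n+1} ≤ 2e + 1` and `deg Q_{n+1} ≤ 2e + 2`, and in these top degrees only products of top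
coefficients survive: the coefficients `b_n` of `t^e` in `P_n` and `c_n` of `t^(e+1)` in `Q_n`
satisfy `b_{n+1} = λ b_n c_n` and `c_{n+1} = c_n (b_n + c_n)`, with `b_1 = λ`, `c_1 = 1`.
Writing `Π_n` for the product common to `B_n` and `C_n`, one has
`Π_{n+1} = (1 + ⋯ + λ^(n-1)) Π_n²`, and `λⁿ + (1 + ⋯ + λ^(n-1)) = 1 + ⋯ + λⁿ` closes the induction.
-/

open Polynomial Finset

variable {R : Type*} [CommSemiring R]

def geomSumProd (a : R) (n : ℕ) : R :=
  ∏ j ∈ Icc 1 (n - 2), (∑ i ∈ range (j + 1), a ^ i) ^ (2 ^ (n - 2 - j))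

theorem geomSumProd_succ_succ (a : R) (m : ℕ) :
    geomSumProd a (m + 2) = (∑ i ∈ range (m + 1), a ^ i) * geomSumProd a (m + 1) ^ 2 := by
  cases m with
  | zero => simp [geomSumProd]
  | succ k =>
    have hexp : ∀ j ∈ Icc 1 k, (∑ i ∈ range (j + 1), a ^ i) ^ (2 ^ (k + 1 - j)) =
        ((∑ i ∈ range (j + 1), a ^ i) ^ (2 ^ (k - j))) ^ 2 := by
      intro j hj
      rw [← pow_mul, ← pow_succ, Nat.sub_add_comm (mem_Icc.mp hj).2]
    simp only [geomSumProd, Nat.add_sub_cancel, show k + 1 + 1 - 2 = k by omega]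
    rw [prod_Icc_succ_top (by omega), prod_congr rfl hexp, prod_pow, Nat.sub_self]
    ring

def fhPoly (a : R) (z : R[X] × R[X]) : R[X] × R[X] :=
  (C a * z.1 * z.2, z.1 ^ 2 + X * z.1 * z.2 + z.2 ^ 2)

theorem semiconj_eval_fhPoly (lam t : ℂ) :
    Function.Semiconj (Prod.map (eval t) (eval t)) (fhPoly lam) (Fh lam t) := by
  rintro ⟨p, q⟩
  simp [fhPoly, Fh]

theorem Fh_iterate_eq_eval (lam t : ℂ) (n : ℕ) :
    (Fh lam t)^[n] (1, 1) =
      (((fhPoly lam)^[n] (1, 1)).1.eval t, ((fhPoly lam)^[n] (1, 1)).2.eval t) := by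
  simpa [Prod.map] using ((semiconj_eval_fhPoly lam t).iterate_right n (1, 1)).symm

section Step

variable {a : R} {z : R[X] × R[X]} {e : ℕ}

theorem coeff_mul_of_natDegree_le_add_one {p q : R[X]} (h₁ : p.natDegree ≤ e)
    (h₂ : q.natDegree ≤ e + 1) : (p * q).coeff (2 * e + 1) = p.coeff e * q.coeff (e + 1) := by
  rw [show 2 * e + 1 = e + (e + 1) by ring, coeff_mul_add_eq_of_natDegree_le h₁ h₂]

theorem natDegree_fhPoly_fst_le (h₁ : z.1.natDegree ≤ e) (h₂ : z.2.natDegree ≤ e + 1) :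
    (fhPoly a z).1.natDegree ≤ 2 * e + 1 :=
  (natDegree_mul_le_of_le (natDegree_mul_le_of_le (natDegree_C a).le h₁) h₂).trans (by omega)

theorem natDegree_fhPoly_snd_le (h₁ : z.1.natDegree ≤ e) (h₂ : z.2.natDegree ≤ e + 1) :
    (fhPoly a z).2.natDegree ≤ 2 * e + 2 := by
  have hX : (X : R[X]).natDegree ≤ 1 := natDegree_X_le
  refine natDegree_add_le_of_degree_le (natDegree_add_le_of_degree_le ?_ ?_) ?_
  · exact (natDegree_pow_le_of_le 2 h₁).trans (by omega)
  · exact (natDegree_mul_le_of_le (natDegree_mul_le_of_le hX h₁) h₂).trans (by omega)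
  · exact (natDegree_pow_le_of_le 2 h₂).trans (by omega)

theorem coeff_fhPoly_fst (h₁ : z.1.natDegree ≤ e) (h₂ : z.2.natDegree ≤ e + 1) :
    (fhPoly a z).1.coeff (2 * e + 1) = a * z.1.coeff e * z.2.coeff (e + 1) := by
  rw [fhPoly, mul_assoc, coeff_C_mul, coeff_mul_of_natDegree_le_add_one h₁ h₂, mul_assoc]

theorem coeff_fhPoly_snd (h₁ : z.1.natDegree ≤ e) (h₂ : z.2.natDegree ≤ e + 1) :
    (fhPoly a z).2.coeff (2 * e + 2) = z.2.coeff (e + 1) * (z.1.coeff e + z.2.coeff (e + 1)) := by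
  have hsq : (z.1 ^ 2).coeff (2 * e + 2) = 0 :=
    coeff_eq_zero_of_natDegree_lt ((natDegree_pow_le_of_le 2 h₁).trans_lt (by omega))
  rw [fhPoly, coeff_add, coeff_add, hsq, mul_assoc, coeff_X_mul,
    coeff_mul_of_natDegree_le_add_one h₁ h₂, show 2 * e + 2 = 2 * (e + 1) by ring,
    coeff_pow_of_natDegree_le h₂]
  ring

end Step

theorem fhPoly_iterate_natDegree_coeff (a : R) (m : ℕ) :
    ((fhPoly a)^[m + 1] (1, 1)).1.natDegree ≤ 2 ^ m - 1 ∧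
    ((fhPoly a)^[m + 1] (1, 1)).2.natDegree ≤ 2 ^ m - 1 + 1 ∧
    ((fhPoly a)^[m + 1] (1, 1)).1.coeff (2 ^ m - 1) = a ^ (m + 1) * geomSumProd a (m + 1) ∧
    ((fhPoly a)^[m + 1] (1, 1)).2.coeff (2 ^ m - 1 + 1) =
      (∑ i ∈ range (m + 1), a ^ i) * geomSumProd a (m + 1) := by
  induction m with
  | zero =>
    simp only [zero_add, Function.iterate_one, pow_zero, pow_one, Nat.sub_self, mul_one, fhPoly]
    refine ⟨(natDegree_C a).le, by compute_degree!, by simp [geomSumProd],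
      by simp [geomSumProd, coeff_one]⟩
  | succ m ih =>
    obtain ⟨h₁, h₂, hb, hc⟩ := ih
    have he : 2 ^ (m + 1) - 1 = 2 * (2 ^ m - 1) + 1 := by
      have := Nat.one_le_two_pow (n := m)
      rw [pow_succ]
      omega
    rw [Function.iterate_succ_apply', he]
    refine ⟨natDegree_fhPoly_fst_le h₁ h₂, natDegree_fhPoly_snd_le h₁ h₂, ?_, ?_⟩
    · rw [coeff_fhPoly_fst h₁ h₂, hb, hc, geomSumProd_succ_succ]
      ring
    · rw [coeff_fhPoly_snd h₁ h₂, hb, hc, geomSumProd_succ_succ, sum_range_succ _ (m + 1)]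
      ring

/-- For every `λ ∈ ℂ` and every `n ≥ 3`, writing `F_{λ,t}ⁿ(1,1) = (P_n(t), Q_n(t))`:
the coefficient of `t^(2^(n-1)-1)` in `P_n` is
`B_n(λ) = λⁿ ∏_{j=1}^{n-2} (1 + λ + ⋯ + λʲ)^(2^(n-2-j))`, and the coefficient of
`t^(2^(n-1))` in `Q_n` is
`C_n(λ) = (1 + λ + ⋯ + λ^(n-1)) ∏_{j=1}^{n-2} (1 + λ + ⋯ + λʲ)^(2^(n-2-j))`. -/
theorem leading_coefficients_of_Pn_Qn (lam : ℂ) (P Q : ℕ → Polynomial ℂ)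
    (hPQ : ∀ (n : ℕ) (t : ℂ), (Fh lam t)^[n] (1, 1) = ((P n).eval t, (Q n).eval t)) :
    ∀ n : ℕ, 3 ≤ n →
      (P n).coeff (2 ^ (n - 1) - 1) =
        lam ^ n * ∏ j ∈ Finset.Icc 1 (n - 2),
          (∑ i ∈ Finset.range (j + 1), lam ^ i) ^ (2 ^ (n - 2 - j)) ∧
      (Q n).coeff (2 ^ (n - 1)) =
        (∑ i ∈ Finset.range n, lam ^ i) * ∏ j ∈ Finset.Icc 1 (n - 2),
          (∑ i ∈ Finset.range (j + 1), lam ^ i) ^ (2 ^ (n - 2 - j)) := by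
  intro n hn
  obtain ⟨m, rfl⟩ : ∃ m, n = m + 1 := ⟨n - 1, by omega⟩
  have hP : P (m + 1) = ((fhPoly lam)^[m + 1] (1, 1)).1 := funext fun t =>
    congrArg Prod.fst ((hPQ _ t).symm.trans (Fh_iterate_eq_eval lam t _))
  have hQ : Q (m + 1) = ((fhPoly lam)^[m + 1] (1, 1)).2 := funext fun t =>
    congrArg Prod.snd ((hPQ _ t).symm.trans (Fh_iterate_eq_eval lam t _))
  obtain ⟨-, -, hb, hc⟩ := fhPoly_iterate_natDegree_coeff lam m
  rw [Nat.sub_add_cancel Nat.one_le_two_pow] at hc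
  rw [Nat.add_sub_cancel, hP, hQ]
  exact ⟨hb, hc⟩
end
end

section
/- Let λ ∈ ℂ be a nonzero algebraic number that is not a root of unity, or let λ = 1, and let k = ℚ(λ). There exists a constant C > 0 such that for every integer n ≥ 1, the number of nonarchimedean places v of k satisfying |λ|_v = 1, |1 + λ + ⋯ + λ^i|_v = 1 for all 1 ≤ i < n, and |1 + λ + ⋯ + λⁿ|_v < 1 (counted with multiplicity N_v) is at most C·n. -/
open Filter Topology IntermediateField

noncomputable section

/-- The set of places of a number field `k`, as described by the product
formula: a family of pairwise distinct absolute values `v` on `k`, each either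
archimedean (the restriction of the complex absolute value under an embedding
`k → ℂ`) or an extension of a `p`-adic absolute value on `ℚ`, together with
integer multiplicities `N_v ≥ 1` such that for every `x ∈ k \ {0}` all but
finitely many factors `|x|_v^{N_v}` equal `1` and `∏_v |x|_v^{N_v} = 1`. -/
structure PlaceFamily (k : Type) [Field k] [Algebra ℚ k] where
  ι : Type
  v : ι → AbsoluteValue k ℝ
  N : ι → ℕ
  N_pos : ∀ i, 0 < N i
  v_injective : Function.Injective v
  arch_or_padic : ∀ i,
    (∃ σ : k →+* ℂ, ∀ x, v i x = ‖σ x‖) ∨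
    (∃ p : ℕ, p.Prime ∧ ∀ q : ℚ, v i (algebraMap ℚ k q) = (padicNorm p q : ℝ))
  mulSupport_finite : ∀ x : k, x ≠ 0 → (Function.mulSupport fun i => v i x ^ N i).Finite
  product_formula : ∀ x : k, x ≠ 0 → ∏ᶠ i, v i x ^ N i = 1

/-!
Put `α = 1 + λ + ⋯ + λⁿ`, nonzero by the hypothesis on `λ`, and `h(x) = Σ_v N_v log⁺ |x|_v`.
At a `p`-adic place the maximum of the terms of `minpoly(α)(α) = 0` is attained twice, so
`|α|_v ^ m = |z|_p` for some `z ∈ ℚ×` and `1 ≤ m ≤ d = [k : ℚ]`; if `|α|_v < 1` this forces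
`|α|_v ^ d ≤ 1/2`. Each place counted thus contributes at least `N_v log 2 / d` to `h(α⁻¹)`, which
equals `h(α)` by the product formula, while `h(α) ≤ n h(λ) + O(log n)` by the triangle inequality,
which is ultrametric at the `p`-adic places.
-/
open Finset Real Function

theorem AbsoluteValue.isNonarchimedean_of_natCast_le_one {K : Type*} [Field K]
    (v : AbsoluteValue K ℝ) (h : ∀ n : ℕ, v n ≤ 1) : IsNonarchimedean v := by
  have : IsUltrametricDist (WithAbs v) :=
    IsUltrametricDist.isUltrametricDist_of_forall_norm_natCast_le_one fun n => by
      rw [WithAbs.norm_eq_apply_ofAbs, ← WithAbs.equiv_apply, map_natCast]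
      exact h n
  intro x y
  simpa [WithAbs.norm_eq_apply_ofAbs] using
    IsUltrametricDist.norm_add_le_max (WithAbs.toAbs v x) (WithAbs.toAbs v y)

theorem AbsoluteValue.isNonarchimedean_of_padicNorm {K : Type*} [Field K] [Algebra ℚ K]
    {v : AbsoluteValue K ℝ} {p : ℕ} [Fact p.Prime]
    (hv : ∀ q : ℚ, v (algebraMap ℚ K q) = padicNorm p q) : IsNonarchimedean v :=
  v.isNonarchimedean_of_natCast_le_one fun n => by
    rw [← map_natCast (algebraMap ℚ K), hv]
    exact_mod_cast padicNorm.of_nat n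

theorem padicNorm.le_inv_of_lt_one {p : ℕ} [Fact p.Prime] {z : ℚ}
    (h : (padicNorm p z : ℝ) < 1) : (padicNorm p z : ℝ) ≤ (p : ℝ)⁻¹ := by
  rw [← Padic.eq_padicNorm] at h ⊢
  simpa using (Padic.norm_lt_pow_iff_norm_le_pow_sub_one (z : ℚ_[p]) 0).1 (by simpa using h)

theorem IsNonarchimedean.exists_lt_apply_eq_of_sum_eq_zero {R ι : Type*} [Ring R] [LinearOrder ι]
    {v : AbsoluteValue R ℝ} (hv : IsNonarchimedean v) {s : Finset ι} {f : ι → R}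
    (hs : ∑ i ∈ s, f i = 0) {i₀ : ι} (hi₀ : i₀ ∈ s) (hf : f i₀ ≠ 0) :
    ∃ i ∈ s, ∃ j ∈ s, i < j ∧ v (f i) = v (f j) := by
  obtain ⟨k, hk, hmax⟩ := s.exists_max_image (fun i => v (f i)) ⟨i₀, hi₀⟩
  by_contra! hne
  have hlt : ∀ j ∈ s, j ≠ k → v (f j) < v (f k) := fun j hj hjk =>
    (hmax j hj).lt_of_ne <| by
      rcases hjk.lt_or_gt with h | h
      exacts [hne j hj k hk h, (hne k hk j hj h).symm]
  have hsum := hv.apply_sum_eq_of_lt (fun a => (v.map_neg a).symm) hk hlt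
  rw [hs, map_zero] at hsum
  exact (v.pos hf).not_ge (hsum ▸ hmax i₀ hi₀)

open Polynomial in
theorem IsNonarchimedean.exists_pow_eq_apply_algebraMap {F K : Type*} [Field F] [Field K]
    [Algebra F K] {v : AbsoluteValue K ℝ} (hv : IsNonarchimedean v) {x : K} (hx₀ : x ≠ 0)
    (hx : IsIntegral F x) :
    ∃ m, 0 < m ∧ m ≤ (minpoly F x).natDegree ∧
      ∃ z : F, z ≠ 0 ∧ v x ^ m = v (algebraMap F K z) := by
  set P := minpoly F x
  have hsum : ∑ i ∈ P.support, algebraMap F K (P.coeff i) * x ^ i = 0 := by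
    rw [← minpoly.aeval F x, aeval_def, eval₂_eq_sum, Polynomial.sum_def]
  obtain ⟨i₀, hi₀⟩ := support_nonempty.2 (minpoly.ne_zero hx)
  obtain ⟨a, ha, b, hb, hab, heq⟩ := hv.exists_lt_apply_eq_of_sum_eq_zero hsum hi₀ <|
    mul_ne_zero (by simpa using mem_support_iff.1 hi₀) (pow_ne_zero _ hx₀)
  obtain ⟨d, rfl⟩ := Nat.exists_eq_add_of_lt hab
  have hca := mem_support_iff.1 ha
  have hcb := mem_support_iff.1 hb
  refine ⟨d + 1, d.succ_pos, le_trans (by omega) (le_natDegree_of_mem_supp _ hb),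
    P.coeff a / P.coeff (a + d + 1), div_ne_zero hca hcb, ?_⟩
  rw [map_mul, map_mul, map_pow, map_pow] at heq
  rw [map_div₀, map_div₀, eq_div_iff (by simpa using hcb)]
  refine mul_left_cancel₀ (pow_pos (v.pos hx₀) a).ne' ?_
  linear_combination -heq

theorem AbsoluteValue.pow_finrank_le_inv_two {K : Type*} [Field K] [Algebra ℚ K]
    [FiniteDimensional ℚ K] {v : AbsoluteValue K ℝ} {p : ℕ} [Fact p.Prime]
    (hv : ∀ q : ℚ, v (algebraMap ℚ K q) = padicNorm p q) {x : K} (hx₀ : x ≠ 0) (hx : v x < 1) :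
    v x ^ Module.finrank ℚ K ≤ 2⁻¹ := by
  obtain ⟨m, hm, hmx, z, -, hz⟩ := (isNonarchimedean_of_padicNorm hv).exists_pow_eq_apply_algebraMap
    hx₀ (IsIntegral.of_finite ℚ x)
  have hz₁ : (padicNorm p z : ℝ) < 1 := by
    rw [← hv, ← hz]
    exact pow_lt_one₀ (v.nonneg x) hx hm.ne'
  calc v x ^ Module.finrank ℚ K
      ≤ v x ^ m := pow_le_pow_of_le_one (v.nonneg x) hx.le (hmx.trans (minpoly.natDegree_le x))
    _ = padicNorm p z := by rw [hz, hv]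
    _ ≤ (p : ℝ)⁻¹ := padicNorm.le_inv_of_lt_one hz₁
    _ ≤ 2⁻¹ := inv_anti₀ two_pos (mod_cast (Fact.out : p.Prime).two_le)

theorem AbsoluteValue.log_two_le_finrank_mul_posLog_inv {K : Type*} [Field K] [Algebra ℚ K]
    [FiniteDimensional ℚ K] {v : AbsoluteValue K ℝ} {p : ℕ} [Fact p.Prime]
    (hv : ∀ q : ℚ, v (algebraMap ℚ K q) = padicNorm p q) {x : K} (hx₀ : x ≠ 0) (hx : v x < 1) :
    log 2 ≤ Module.finrank ℚ K * log⁺ (v x)⁻¹ := by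
  have hpos := v.pos hx₀
  rw [posLog_eq_log (by rw [abs_inv, abs_of_pos hpos]; exact (one_lt_inv₀ hpos).2 hx |>.le),
    log_inv, mul_neg, ← log_pow, le_neg, ← log_inv]
  exact log_le_log (pow_pos hpos _) (v.pow_finrank_le_inv_two hv hx₀ hx)

theorem Real.posLog_max_one {x : ℝ} (hx : 0 ≤ x) : log⁺ (max 1 x) = log⁺ x := by
  rw [posLog_eq_log_max_one hx, posLog_eq_log (le_abs.2 (.inl (le_max_left _ _)))]

theorem AbsoluteValue.apply_pow_le_max_one_pow {R : Type*} [Semiring R] [Nontrivial R]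
    (v : AbsoluteValue R ℝ) (x : R) {l n : ℕ} (h : l ≤ n) : v (x ^ l) ≤ max 1 (v x) ^ n := by
  rw [map_pow]
  exact (pow_le_pow_left₀ (v.nonneg x) (le_max_right _ _) l).trans
    (pow_le_pow_right₀ (le_max_left _ _) h)

theorem AbsoluteValue.posLog_apply_geom_sum_le {R : Type*} [Semiring R] [Nontrivial R]
    (v : AbsoluteValue R ℝ) (x : R) (n : ℕ) :
    log⁺ (v (∑ l ∈ range (n + 1), x ^ l)) ≤ log (n + 1) + n * log⁺ (v x) := by
  have hsum : v (∑ l ∈ range (n + 1), x ^ l) ≤ (n + 1 : ℕ) * max 1 (v x) ^ n := by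
    refine (v.sum_le _ _).trans ?_
    simpa using Finset.sum_le_card_nsmul _ _ _ fun l hl =>
      v.apply_pow_le_max_one_pow x (Nat.lt_succ_iff.1 (mem_range.1 hl))
  calc log⁺ (v (∑ l ∈ range (n + 1), x ^ l))
      ≤ log⁺ ((n + 1 : ℕ) * max 1 (v x) ^ n) := posLog_le_posLog (v.nonneg _) hsum
    _ ≤ log (n + 1 : ℕ) + log⁺ (max 1 (v x) ^ n) := posLog_nat_mul
    _ = log (n + 1) + n * log⁺ (v x) := by
      rw [posLog_pow, posLog_max_one (v.nonneg x)]
      push_cast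
      ring

theorem IsNonarchimedean.posLog_apply_geom_sum_le {R : Type*} [Semiring R] [Nontrivial R]
    {v : AbsoluteValue R ℝ} (hv : IsNonarchimedean v) (x : R) (n : ℕ) :
    log⁺ (v (∑ l ∈ range (n + 1), x ^ l)) ≤ n * log⁺ (v x) := by
  have hsum : v (∑ l ∈ range (n + 1), x ^ l) ≤ max 1 (v x) ^ n :=
    (hv.apply_sum_le_sup nonempty_range_add_one).trans <| Finset.sup'_le _ _ fun l hl =>
      v.apply_pow_le_max_one_pow x (Nat.lt_succ_iff.1 (mem_range.1 hl))
  calc log⁺ (v (∑ l ∈ range (n + 1), x ^ l))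
      ≤ log⁺ (max 1 (v x) ^ n) := posLog_le_posLog (v.nonneg _) hsum
    _ = n * log⁺ (v x) := by rw [posLog_pow, posLog_max_one (v.nonneg x)]

theorem geom_sum_succ_ne_zero {R : Type*} [Ring R] [CharZero R] {x : R}
    (hx : (∀ n : ℕ, 1 ≤ n → x ^ n ≠ 1) ∨ x = 1) (n : ℕ) : ∑ i ∈ range (n + 1), x ^ i ≠ 0 := by
  rcases hx with hx | rfl
  · intro h0
    exact hx (n + 1) n.succ_pos (sub_eq_zero.1 (by rw [← geom_sum_mul, h0, zero_mul]))
  · simpa using n.cast_add_one_ne_zero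

namespace PlaceFamily

variable {k : Type} [Field k] [Algebra ℚ k] (M : PlaceFamily k)

def IsPadic (i : M.ι) : Prop :=
  ∃ p : ℕ, p.Prime ∧ ∀ q : ℚ, M.v i (algebraMap ℚ k q) = (padicNorm p q : ℝ)

theorem isNonarchimedean_of_isPadic {i : M.ι} (hi : M.IsPadic i) : IsNonarchimedean (M.v i) := by
  obtain ⟨p, hp, hv⟩ := hi
  have := Fact.mk hp
  exact AbsoluteValue.isNonarchimedean_of_padicNorm hv

theorem finite_setOf_not_isPadic [NumberField k] : {i | ¬ M.IsPadic i}.Finite := by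
  have harch (i : {i | ¬ M.IsPadic i}) : ∃ σ : k →+* ℂ, ∀ x, M.v i x = ‖σ x‖ :=
    (M.arch_or_padic i).resolve_right i.2
  choose σ hσ using harch
  refine Set.finite_coe_iff.1 (Finite.of_injective σ fun i j hij => Subtype.ext ?_)
  exact M.v_injective (DFunLike.ext _ _ fun x => by rw [hσ, hσ, hij])

theorem finite_setOf_one_lt (x : k) : {i | 1 < M.v i x}.Finite := by
  rcases eq_or_ne x 0 with rfl | hx
  · norm_num
  refine (M.mulSupport_finite x hx).subset fun i hi => ?_
  exact (one_lt_pow₀ hi (M.N_pos i).ne').ne'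

def logHeight (x : k) : ℝ := ∑ᶠ i, (M.N i : ℝ) * log⁺ (M.v i x)

theorem hasFiniteSupport_mul_posLog (x : k) :
    HasFiniteSupport fun i => (M.N i : ℝ) * log⁺ (M.v i x) := by
  refine (M.finite_setOf_one_lt x).subset fun i hi => ?_
  have := right_ne_zero_of_mul hi
  rw [Ne, posLog_eq_zero_iff, abs_of_nonneg ((M.v i).nonneg x), not_le] at this
  exact this

theorem logHeight_nonneg (x : k) : 0 ≤ M.logHeight x :=
  finsum_nonneg fun _ => mul_nonneg (Nat.cast_nonneg _) posLog_nonneg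

theorem logHeight_inv (x : k) : M.logHeight x⁻¹ = M.logHeight x := by
  rcases eq_or_ne x 0 with rfl | hx
  · rw [inv_zero]
  have hlog : ∑ᶠ i, (M.N i : ℝ) * log (M.v i x) = 0 := by
    rw [← log_one, ← M.product_formula x hx, log_finprod fun i => pow_pos ((M.v i).pos hx) _]
    simp_rw [log_pow]
  simp_rw [← posLog_sub_posLog_inv, mul_sub, ← map_inv₀] at hlog
  rw [finsum_sub_distrib (M.hasFiniteSupport_mul_posLog x) (M.hasFiniteSupport_mul_posLog x⁻¹)] at hlog
  exact (sub_eq_zero.1 hlog).symm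

theorem logHeight_geom_sum_le [NumberField k] (x : k) (n : ℕ) :
    M.logHeight (∑ l ∈ range (n + 1), x ^ l) ≤
      n * M.logHeight x + (∑ᶠ i ∈ {i | ¬ M.IsPadic i}, (M.N i : ℝ)) * log (n + 1) := by
  have hA : HasFiniteSupport ({i | ¬ M.IsPadic i}.indicator fun i => (M.N i : ℝ)) :=
    M.finite_setOf_not_isPadic.subset Set.support_indicator_subset
  have hx := M.hasFiniteSupport_mul_posLog x
  have hlocal (i : M.ι) : (M.N i : ℝ) * log⁺ (M.v i (∑ l ∈ range (n + 1), x ^ l)) ≤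
      n * ((M.N i : ℝ) * log⁺ (M.v i x)) +
        {i | ¬ M.IsPadic i}.indicator (fun i => (M.N i : ℝ)) i * log (n + 1) := by
    by_cases hi : M.IsPadic i
    · rw [Set.indicator_of_notMem (not_not.2 hi), zero_mul, add_zero, mul_left_comm]
      gcongr
      exact (M.isNonarchimedean_of_isPadic hi).posLog_apply_geom_sum_le x n
    · rw [Set.indicator_of_mem hi]
      calc (M.N i : ℝ) * log⁺ (M.v i (∑ l ∈ range (n + 1), x ^ l))
          ≤ M.N i * (log (n + 1) + n * log⁺ (M.v i x)) := by
            gcongr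
            exact (M.v i).posLog_apply_geom_sum_le x n
        _ = _ := by ring
  rw [logHeight, logHeight, finsum_mem_def, mul_finsum, finsum_mul,
    ← finsum_add_distrib (hx.fun_mul_right _) (hA.fun_mul_left _)]
  exact finsum_le_finsum' (M.hasFiniteSupport_mul_posLog _)
    ((hx.fun_mul_right _).fun_add (hA.fun_mul_left _)) hlocal

theorem finite_of_forall_lt_one {s : Set M.ι} {x : k} (hx : x ≠ 0)
    (hs : ∀ i ∈ s, M.v i x < 1) : s.Finite :=
  (M.finite_setOf_one_lt x⁻¹).subset fun i hi => by
    rw [Set.mem_ofPred, map_inv₀]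
    exact (one_lt_inv₀ ((M.v i).pos hx)).2 (hs i hi)

theorem finsum_mem_N_le_mul_logHeight [FiniteDimensional ℚ k] {s : Set M.ι} {x : k}
    (hx : x ≠ 0) (hs : ∀ i ∈ s, M.IsPadic i ∧ M.v i x < 1) :
    ∑ᶠ i ∈ s, (M.N i : ℝ) ≤ Module.finrank ℚ k / log 2 * M.logHeight x := by
  have hsfin := M.finite_of_forall_lt_one hx fun i hi => (hs i hi).2
  rw [← logHeight_inv, logHeight, mul_finsum, finsum_mem_def]
  refine finsum_le_finsum' (hsfin.subset Set.support_indicator_subset)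
    ((M.hasFiniteSupport_mul_posLog _).fun_mul_right _) fun i => ?_
  by_cases hi : i ∈ s
  · obtain ⟨⟨p, hp, hv⟩, hvx⟩ := hs i hi
    have := Fact.mk hp
    have hlog2 := (M.v i).log_two_le_finrank_mul_posLog_inv hv hx hvx
    rw [Set.indicator_of_mem hi, map_inv₀, div_mul_eq_mul_div, le_div_iff₀ (log_pos one_lt_two)]
    linarith [mul_le_mul_of_nonneg_left hlog2 (Nat.cast_nonneg (M.N i))]
  · rw [Set.indicator_of_notMem hi]
    exact mul_nonneg (by positivity) (mul_nonneg (Nat.cast_nonneg _) posLog_nonneg)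

end PlaceFamily

theorem count_of_places_bound_general (lam : ℂ) (halg : IsAlgebraic ℚ lam)
    (hru : (∀ n : ℕ, 1 ≤ n → lam ^ n ≠ 1) ∨ lam = 1)
    (M : PlaceFamily ℚ⟮lam⟯) :
    ∃ C : ℝ, 0 < C ∧ ∀ n : ℕ, 1 ≤ n →
      {i : M.ι |
          (∃ p : ℕ, p.Prime ∧ ∀ q : ℚ,
            M.v i (algebraMap ℚ ℚ⟮lam⟯ q) = (padicNorm p q : ℝ)) ∧
          M.v i (IntermediateField.AdjoinSimple.gen ℚ lam) = 1 ∧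
          (∀ j : ℕ, 1 ≤ j → j < n →
            M.v i (∑ l ∈ Finset.range (j + 1),
              (IntermediateField.AdjoinSimple.gen ℚ lam) ^ l) = 1) ∧
          M.v i (∑ l ∈ Finset.range (n + 1),
            (IntermediateField.AdjoinSimple.gen ℚ lam) ^ l) < 1}.Finite ∧
      ∑ᶠ i ∈ {i : M.ι |
          (∃ p : ℕ, p.Prime ∧ ∀ q : ℚ,
            M.v i (algebraMap ℚ ℚ⟮lam⟯ q) = (padicNorm p q : ℝ)) ∧
          M.v i (IntermediateField.AdjoinSimple.gen ℚ lam) = 1 ∧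
          (∀ j : ℕ, 1 ≤ j → j < n →
            M.v i (∑ l ∈ Finset.range (j + 1),
              (IntermediateField.AdjoinSimple.gen ℚ lam) ^ l) = 1) ∧
          M.v i (∑ l ∈ Finset.range (n + 1),
            (IntermediateField.AdjoinSimple.gen ℚ lam) ^ l) < 1},
        (M.N i : ℝ) ≤ C * n := by
  have : FiniteDimensional ℚ ℚ⟮lam⟯ := adjoin.finiteDimensional halg.isIntegral
  have : NumberField ℚ⟮lam⟯ := ⟨⟩
  set g := AdjoinSimple.gen ℚ lam
  set D : ℝ := (Module.finrank ℚ ℚ⟮lam⟯ : ℝ)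
  set A := ∑ᶠ i ∈ {i | ¬ M.IsPadic i}, (M.N i : ℝ)
  have hA : 0 ≤ A := finsum_nonneg fun _ => finsum_nonneg fun _ => Nat.cast_nonneg _
  have hC : 0 ≤ D / log 2 * (M.logHeight g + A * log 2) := by
    have := M.logHeight_nonneg g
    positivity
  refine ⟨D / log 2 * (M.logHeight g + A * log 2) + 1, by linarith, fun n _ => ?_⟩
  have hα : ∑ l ∈ range (n + 1), g ^ l ≠ 0 := fun h0 =>
    geom_sum_succ_ne_zero hru n (by simpa [g] using congrArg (algebraMap ℚ⟮lam⟯ ℂ) h0)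
  have hlog : log (n + 1) ≤ n * log 2 := by
    rw [← log_pow]
    gcongr
    exact_mod_cast Nat.lt_two_pow_self
  refine ⟨M.finite_of_forall_lt_one hα fun i hi => hi.2.2.2, ?_⟩
  calc _ ≤ D / log 2 * M.logHeight (∑ l ∈ range (n + 1), g ^ l) := by
        exact M.finsum_mem_N_le_mul_logHeight hα fun i hi => ⟨hi.1, hi.2.2.2⟩
    _ ≤ D / log 2 * (n * M.logHeight g + A * log (n + 1)) := by
        gcongr
        exact M.logHeight_geom_sum_le g n
    _ ≤ D / log 2 * (M.logHeight g + A * log 2) * n := by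
        rw [mul_assoc]
        gcongr
        nlinarith
    _ ≤ _ := by gcongr; linarith

/-- Let `λ` be a nonzero algebraic number that is not a root of unity, or
`λ = 1`, and let `k = ℚ(λ)`.  There is a constant `C > 0` such that for every
`n ≥ 1`, the nonarchimedean places `v` of `k` with `|λ|_v = 1`,
`|1 + λ + ⋯ + λⁱ|_v = 1` for all `1 ≤ i < n`, and `|1 + λ + ⋯ + λⁿ|_v < 1`
form a finite set whose cardinality, counted with multiplicity `N_v`, is at
most `C·n`. -/
theorem count_of_places_bound (lam : ℂ) (hlam : lam ≠ 0) (halg : IsAlgebraic ℚ lam)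
    (hru : (∀ n : ℕ, 1 ≤ n → lam ^ n ≠ 1) ∨ lam = 1)
    (M : PlaceFamily ℚ⟮lam⟯) :
    ∃ C : ℝ, 0 < C ∧ ∀ n : ℕ, 1 ≤ n →
      {i : M.ι |
          (∃ p : ℕ, p.Prime ∧ ∀ q : ℚ,
            M.v i (algebraMap ℚ ℚ⟮lam⟯ q) = (padicNorm p q : ℝ)) ∧
          M.v i (IntermediateField.AdjoinSimple.gen ℚ lam) = 1 ∧
          (∀ j : ℕ, 1 ≤ j → j < n →
            M.v i (∑ l ∈ Finset.range (j + 1),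
              (IntermediateField.AdjoinSimple.gen ℚ lam) ^ l) = 1) ∧
          M.v i (∑ l ∈ Finset.range (n + 1),
            (IntermediateField.AdjoinSimple.gen ℚ lam) ^ l) < 1}.Finite ∧
      ∑ᶠ i ∈ {i : M.ι |
          (∃ p : ℕ, p.Prime ∧ ∀ q : ℚ,
            M.v i (algebraMap ℚ ℚ⟮lam⟯ q) = (padicNorm p q : ℝ)) ∧
          M.v i (IntermediateField.AdjoinSimple.gen ℚ lam) = 1 ∧
          (∀ j : ℕ, 1 ≤ j → j < n →
            M.v i (∑ l ∈ Finset.range (j + 1),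
              (IntermediateField.AdjoinSimple.gen ℚ lam) ^ l) = 1) ∧
          M.v i (∑ l ∈ Finset.range (n + 1),
            (IntermediateField.AdjoinSimple.gen ℚ lam) ^ l) < 1},
        (M.N i : ℝ) ≤ C * n :=
  count_of_places_bound_general lam halg hru M
end
end

section
/- Let λ ∈ ℂ ∖ {0} be such that 1 + λ + ⋯ + λ^j ≠ 0 for all j ≥ 1 and the series ∑_{i=1}^∞ 2^{−i} log|1 + λ + ⋯ + λ^i| converges. Then lim_{n→∞} |Res(P_n, Q_n)|^{−1/4^{n−1}} = |λ|^{−2} ∏_{j=1}^∞ |1 + λ + ⋯ + λ^j|^{−3·4^{−j−1}}, where Res(P_n, Q_n) denotes the resultant of the polynomials P_n and Q_n and the infinite product on the right converges. (This limit computes the homogeneous capacity of the set {G⁺ ≤ 0} ⊂ ℂ².) -/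
open Filter Topology

noncomputable section

/-- The resultant of two complex polynomials, computed over the algebraically
closed field `ℂ` as `Res(P,Q) = lc(P)^(deg Q) ∏_{α : P(α)=0} Q(α)`, the
product running over the roots of `P` with multiplicity. -/
def res (P Q : Polynomial ℂ) : ℂ :=
  P.leadingCoeff ^ Q.natDegree * (P.roots.map (fun a => Q.eval a)).prod

/-!
Write `S_m = 1 + λ + ⋯ + λ^m`. By induction, `deg P_{m+1} + 1 = deg Q_{m+1} = 2^m`, with leading
coefficients `λ^{m+1} d_m` and `S_m d_m`, where `d_0 = 1` and `d_{m+1} = d_m² S_m`. Since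
`P_{n+1} = λ P_n Q_n`, while `Q_{n+1}` is `Q_n²` modulo `P_n` and `P_n²` modulo `Q_n`, the
multiplicativity of the resultant gives `|Res_{n+1}| = |λ|^{2^n} |lc Q_n|² |Res_n|⁴`.
Taking logarithms, `f_m = log |d_m|` and `y_m = log |Res_{m+1}|` satisfy linear recurrences,
which solve in closed form to
`y_m / 4^m = 2 log |λ| - log |λ| / 2^m - f_m / 4^m + (3/4) ∑_{j<m} log |S_j| / 4^j`.
Here `f_m / 2^m = ∑_{j<m} log |S_j| / 2^{j+1}` converges by hypothesis, so `f_m / 4^m → 0`.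
-/
open Polynomial

section RealSequences

variable {s f : ℕ → ℝ}

theorem div_two_pow_eq_sum_of_recurrence (hf0 : f 0 = 0) (hf : ∀ n, f (n + 1) = 2 * f n + s n)
    (n : ℕ) : f n / 2 ^ n = ∑ j ∈ Finset.range n, s j / 2 ^ (j + 1) := by
  induction n with
  | zero => simp [hf0]
  | succ n ih =>
    rw [Finset.sum_range_succ, ← ih, hf, pow_succ]
    field_simp

theorem tendsto_div_four_pow_of_recurrence (hs : Summable fun n => s n / 2 ^ n) (hf0 : f 0 = 0)
    (hf : ∀ n, f (n + 1) = 2 * f n + s n) : Tendsto (fun n => f n / 4 ^ n) atTop (𝓝 0) := by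
  have hs' : Summable fun j => s j / 2 ^ (j + 1) := by
    simpa [pow_succ, div_div] using hs.div_const 2
  have hpartial : Tendsto (fun n => f n / 2 ^ n) atTop (𝓝 (∑' j, s j / 2 ^ (j + 1))) := by
    simpa only [div_two_pow_eq_sum_of_recurrence hf0 hf] using hs'.hasSum.tendsto_sum_nat
  have hgeom :=
    tendsto_pow_atTop_nhds_zero_of_lt_one (r := (1 / 2 : ℝ)) (by norm_num) (by norm_num)
  refine (mul_zero (∑' j, s j / 2 ^ (j + 1)) ▸ hpartial.mul hgeom).congr fun n => ?_
  rw [one_div_pow, show (4 : ℝ) ^ n = 2 ^ n * 2 ^ n by rw [← mul_pow]; norm_num]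
  field_simp

theorem summable_div_four_pow (hs : Summable fun n => s n / 2 ^ n) :
    Summable fun n => s n / 4 ^ n := by
  refine hs.abs.of_norm_bounded fun n => ?_
  rw [Real.norm_eq_abs, abs_div, abs_div, abs_of_pos (by positivity : (0 : ℝ) < 4 ^ n),
    abs_of_pos (by positivity : (0 : ℝ) < 2 ^ n)]
  gcongr
  norm_num

theorem div_four_pow_eq_of_coupled_recurrence {L : ℝ} {y : ℕ → ℝ} (hf0 : f 0 = 0)
    (hf : ∀ n, f (n + 1) = 2 * f n + s n) (hy0 : y 0 = L)
    (hy : ∀ n, y (n + 1) = 4 * y n + 2 ^ (n + 1) * L + 2 * (f n + s n)) (n : ℕ) :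
    y n / 4 ^ n
      = 2 * L - L / 2 ^ n - f n / 4 ^ n + 3 / 4 * ∑ j ∈ Finset.range n, s j / 4 ^ j := by
  induction n with
  | zero => simp [hf0, hy0]; ring
  | succ n ih =>
    rw [div_eq_iff (by positivity)] at ih
    rw [hy, ih, hf, Finset.sum_range_succ, pow_succ 4, pow_succ 2,
      show (4 : ℝ) ^ n = 2 ^ n * 2 ^ n by rw [← mul_pow]; norm_num]
    field_simp
    ring

theorem tendsto_div_four_pow_of_coupled_recurrence {L : ℝ} {y : ℕ → ℝ}
    (hs : Summable fun n => s n / 2 ^ n) (hf0 : f 0 = 0) (hf : ∀ n, f (n + 1) = 2 * f n + s n)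
    (hy0 : y 0 = L) (hy : ∀ n, y (n + 1) = 4 * y n + 2 ^ (n + 1) * L + 2 * (f n + s n)) :
    Tendsto (fun n => y n / 4 ^ n) atTop (𝓝 (2 * L + 3 / 4 * ∑' n, s n / 4 ^ n)) := by
  have hL : Tendsto (fun n : ℕ => L / 2 ^ n) atTop (𝓝 0) :=
    tendsto_const_nhds.div_atTop (tendsto_pow_atTop_atTop_of_one_lt one_lt_two)
  have hlim := (((tendsto_const_nhds (x := 2 * L)).sub hL).sub
    (tendsto_div_four_pow_of_recurrence hs hf0 hf)).add
      ((summable_div_four_pow hs).hasSum.tendsto_sum_nat.const_mul (3 / 4))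
  simp only [sub_zero] at hlim
  exact hlim.congr fun n => (div_four_pow_eq_of_coupled_recurrence hf0 hf hy0 hy n).symm

end RealSequences

theorem res_eq_resultant (p q : ℂ[X]) : res p q = p.resultant q :=
  (resultant_eq_prod_eval p q _ le_rfl (IsAlgClosed.splits p)).symm

theorem norm_res_comm (p q : ℂ[X]) : ‖res p q‖ = ‖res q p‖ := by
  simp [res_eq_resultant, resultant_comm p q]

theorem res_mul_left {p q : ℂ[X]} (hp : p ≠ 0) (hq : q ≠ 0) (r : ℂ[X]) :
    res (p * q) r = res p r * res q r := by
  simp only [res, leadingCoeff_mul, roots_mul (mul_ne_zero hp hq), Multiset.map_add,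
    Multiset.prod_add]
  ring

theorem res_C_mul_left {a : ℂ} (ha : a ≠ 0) (p r : ℂ[X]) :
    res (C a * p) r = a ^ r.natDegree * res p r := by
  simp only [res, leadingCoeff_mul, leadingCoeff_C, roots_C_mul p ha]
  ring

theorem res_eq_of_eval_eq_pow {p q r : ℂ[X]} {n e : ℕ}
    (hdeg : r.natDegree = n * q.natDegree + e)
    (heval : ∀ a ∈ p.roots, r.eval a = q.eval a ^ n) :
    res p r = p.leadingCoeff ^ e * res p q ^ n := by
  rw [res, res, Multiset.map_congr rfl heval, Multiset.prod_map_pow, hdeg]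
  ring

theorem natDegree_leadingCoeff_sq_add_X_mul_add_sq {R : Type*} [CommSemiring R] {p q : R[X]}
    (hdeg : p.natDegree + 1 = q.natDegree)
    (hlc : q.leadingCoeff * (p.leadingCoeff + q.leadingCoeff) ≠ 0) :
    (p ^ 2 + X * p * q + q ^ 2).natDegree = 2 * q.natDegree ∧
      (p ^ 2 + X * p * q + q ^ 2).leadingCoeff
        = q.leadingCoeff * (p.leadingCoeff + q.leadingCoeff) := by
  have hcoeff : (p ^ 2 + X * p * q + q ^ 2).coeff (2 * q.natDegree)
      = q.leadingCoeff * (p.leadingCoeff + q.leadingCoeff) := by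
    have hp2 : (p ^ 2).coeff (2 * q.natDegree) = 0 :=
      coeff_eq_zero_of_natDegree_lt ((natDegree_pow_le).trans_lt (by omega))
    have hpq : (X * p * q).coeff (2 * q.natDegree) = p.leadingCoeff * q.leadingCoeff := by
      rw [show 2 * q.natDegree = p.natDegree + q.natDegree + 1 by omega, mul_assoc, coeff_X_mul,
        coeff_mul_degree_add_degree]
    have hq2 : (q ^ 2).coeff (2 * q.natDegree) = q.leadingCoeff ^ 2 := by
      rw [two_mul, sq, coeff_mul_degree_add_degree, sq]
    rw [coeff_add, coeff_add, hp2, hpq, hq2]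
    ring
  have hle : (p ^ 2 + X * p * q + q ^ 2).natDegree ≤ 2 * q.natDegree := by
    refine natDegree_add_le_of_degree_le (natDegree_add_le_of_degree_le ?_ ?_) ?_
    · exact natDegree_pow_le.trans (by omega)
    · calc (X * p * q).natDegree ≤ (X.natDegree + p.natDegree) + q.natDegree :=
            natDegree_mul_le.trans (add_le_add natDegree_mul_le le_rfl)
        _ ≤ 2 * q.natDegree := by have := natDegree_X_le (R := R); omega
    · exact natDegree_pow_le.trans (by omega)
  have hnat := natDegree_eq_of_le_of_coeff_ne_zero hle (hcoeff ▸ hlc)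
  exact ⟨hnat, by rw [leadingCoeff, hnat, hcoeff]⟩

theorem norm_res_C_mul_mul_sq_add_X_mul_add_sq {lam : ℂ} (hlam : lam ≠ 0) {p q : ℂ[X]}
    (hp : p ≠ 0) (hq : q ≠ 0) (hdeg : p.natDegree + 1 = q.natDegree)
    (hr : (p ^ 2 + X * p * q + q ^ 2).natDegree = 2 * q.natDegree) :
    ‖res (C lam * p * q) (p ^ 2 + X * p * q + q ^ 2)‖
      = ‖lam‖ ^ (2 * q.natDegree) * ‖q.leadingCoeff‖ ^ 2 * ‖res p q‖ ^ 4 := by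
  have hrp : res p (p ^ 2 + X * p * q + q ^ 2) = p.leadingCoeff ^ 0 * res p q ^ 2 :=
    res_eq_of_eval_eq_pow hr fun a ha => by
      simp [(mem_roots hp).mp ha |>.eq_zero]
  have hrq : res q (p ^ 2 + X * p * q + q ^ 2) = q.leadingCoeff ^ 2 * res q p ^ 2 :=
    res_eq_of_eval_eq_pow (by rw [hr]; omega) fun a ha => by
      simp [(mem_roots hq).mp ha |>.eq_zero]
  rw [res_mul_left (mul_ne_zero (C_ne_zero.mpr hlam) hp) hq, res_C_mul_left hlam, hrp, hrq, hr]
  simp only [norm_mul, norm_pow, norm_res_comm q p]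
  ring

def geomSum (lam : ℂ) (n : ℕ) : ℂ := ∑ i ∈ Finset.range (n + 1), lam ^ i

def leadFactor (lam : ℂ) : ℕ → ℂ
  | 0 => 1
  | n + 1 => leadFactor lam n ^ 2 * geomSum lam n

theorem geomSum_succ (lam : ℂ) (n : ℕ) : geomSum lam (n + 1) = geomSum lam n + lam ^ (n + 1) :=
  Finset.sum_range_succ _ _

theorem geomSum_zero (lam : ℂ) : geomSum lam 0 = 1 := by
  simp [geomSum]

theorem leadFactor_ne_zero {lam : ℂ} (hS : ∀ n, geomSum lam n ≠ 0) (n : ℕ) :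
    leadFactor lam n ≠ 0 := by
  induction n with
  | zero => exact one_ne_zero
  | succ n ih => exact mul_ne_zero (pow_ne_zero _ ih) (hS n)

section Orbit

variable {lam : ℂ} {P Q : ℕ → ℂ[X]}
  (hPQ : ∀ (n : ℕ) (t : ℂ), (Fh lam t)^[n] (1, 1) = ((P n).eval t, (Q n).eval t))
include hPQ

theorem orbit_zero : P 0 = 1 ∧ Q 0 = 1 := by
  constructor <;> refine Polynomial.funext fun t => ?_
  · simpa using (congrArg Prod.fst (hPQ 0 t)).symm
  · simpa using (congrArg Prod.snd (hPQ 0 t)).symm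

theorem orbit_succ (n : ℕ) :
    P (n + 1) = C lam * P n * Q n ∧ Q (n + 1) = P n ^ 2 + X * P n * Q n + Q n ^ 2 := by
  have h := hPQ (n + 1)
  simp only [Function.iterate_succ_apply', hPQ n, Fh, Prod.ext_iff] at h
  constructor <;> refine Polynomial.funext fun t => ?_
  · simp [← (h t).1]
  · simp [← (h t).2]

theorem orbit_one : P 1 = C lam ∧ Q 1 = X + C 2 := by
  obtain ⟨hP0, hQ0⟩ := orbit_zero hPQ
  obtain ⟨hP1, hQ1⟩ := orbit_succ hPQ 0
  rw [hP0, hQ0] at hP1 hQ1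
  exact ⟨by rw [hP1]; ring, by rw [hQ1, C_ofNat]; ring⟩

theorem orbit_norm_res_one : ‖res (P 1) (Q 1)‖ = ‖lam‖ := by
  simp [(orbit_one hPQ).1, (orbit_one hPQ).2, res]

variable (hlam : lam ≠ 0) (hS : ∀ n, geomSum lam n ≠ 0)
include hlam hS

theorem orbit_natDegree_leadingCoeff (m : ℕ) :
    (P (m + 1)).natDegree + 1 = (Q (m + 1)).natDegree ∧ (Q (m + 1)).natDegree = 2 ^ m ∧
      (P (m + 1)).leadingCoeff = lam ^ (m + 1) * leadFactor lam m ∧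
      (Q (m + 1)).leadingCoeff = geomSum lam m * leadFactor lam m := by
  induction m with
  | zero =>
    rw [(orbit_one hPQ).1, (orbit_one hPQ).2]
    simp [geomSum_zero, leadFactor]
  | succ m ih =>
    obtain ⟨hdeg, hdegQ, hlcP, hlcQ⟩ := ih
    obtain ⟨hP, hQ⟩ := orbit_succ hPQ (m + 1)
    have hd := leadFactor_ne_zero hS m
    have hPne : P (m + 1) ≠ 0 := fun h => by simp [h, hlam, hd] at hlcP
    have hQne : Q (m + 1) ≠ 0 := fun h => by simp [h, hS m, hd] at hlcQ
    have hsum : (P (m + 1)).leadingCoeff + (Q (m + 1)).leadingCoeff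
        = geomSum lam (m + 1) * leadFactor lam m := by
      rw [hlcP, hlcQ, geomSum_succ]; ring
    obtain ⟨hdegQ', hlcQ'⟩ := natDegree_leadingCoeff_sq_add_X_mul_add_sq hdeg
      (by rw [hsum, hlcQ]; exact mul_ne_zero (mul_ne_zero (hS m) hd) (mul_ne_zero (hS _) hd))
    rw [hP, hQ, hdegQ', hlcQ', hsum, mul_assoc, natDegree_C_mul hlam,
      leadingCoeff_C_mul_of_isUnit hlam.isUnit, natDegree_mul hPne hQne, leadingCoeff_mul, hlcP,
      hlcQ, hdegQ, leadFactor]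
    refine ⟨by omega, by rw [pow_succ]; ring, by ring, by ring⟩

theorem orbit_norm_res_succ (m : ℕ) :
    ‖res (P (m + 2)) (Q (m + 2))‖ = ‖lam‖ ^ 2 ^ (m + 1)
      * ‖geomSum lam m * leadFactor lam m‖ ^ 2 * ‖res (P (m + 1)) (Q (m + 1))‖ ^ 4 := by
  obtain ⟨hdeg, hdegQ, hlcP, hlcQ⟩ := orbit_natDegree_leadingCoeff hPQ hlam hS m
  obtain ⟨hdeg', hdegQ', -, -⟩ := orbit_natDegree_leadingCoeff hPQ hlam hS (m + 1)
  obtain ⟨hP, hQ⟩ := orbit_succ hPQ (m + 1)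
  have hd := leadFactor_ne_zero hS m
  have hPne : P (m + 1) ≠ 0 := fun h => by simp [h, hlam, hd] at hlcP
  have hQne : Q (m + 1) ≠ 0 := fun h => by simp [h, hS m, hd] at hlcQ
  rw [hP, hQ, norm_res_C_mul_mul_sq_add_X_mul_add_sq hlam hPne hQne hdeg
    (by rw [← hQ, hdegQ', hdegQ, pow_succ, mul_comm]), hlcQ, hdegQ, pow_succ]
  ring

theorem orbit_res_ne_zero (m : ℕ) : res (P (m + 1)) (Q (m + 1)) ≠ 0 := by
  induction m with
  | zero => rw [← norm_ne_zero_iff, orbit_norm_res_one hPQ]; exact norm_ne_zero_iff.mpr hlam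
  | succ m ih =>
    rw [← norm_ne_zero_iff] at ih ⊢
    rw [orbit_norm_res_succ hPQ hlam hS]
    simp [hlam, hS m, leadFactor_ne_zero hS m, ih]

theorem orbit_tendsto_log_norm_res (hsum : Summable fun n => Real.log ‖geomSum lam n‖ / 2 ^ n) :
    Tendsto (fun m => Real.log ‖res (P (m + 1)) (Q (m + 1))‖ / 4 ^ m) atTop
      (𝓝 (2 * Real.log ‖lam‖ + 3 / 4 * ∑' n, Real.log ‖geomSum lam n‖ / 4 ^ n)) := by
  refine tendsto_div_four_pow_of_coupled_recurrence (f := fun m => Real.log ‖leadFactor lam m‖)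
    hsum (by simp [leadFactor]) (fun n => ?_) (by rw [orbit_norm_res_one hPQ]) (fun n => ?_)
  · simp [leadFactor, Real.log_mul, Real.log_pow, leadFactor_ne_zero hS, hS]
  · rw [orbit_norm_res_succ hPQ hlam hS]
    simp [Real.log_mul, Real.log_pow, leadFactor_ne_zero hS, hS, hlam,
      orbit_res_ne_zero hPQ hlam hS]
    ring

end Orbit

theorem hasProd_norm_geomSum_rpow {lam : ℂ} (hS : ∀ n, geomSum lam n ≠ 0)
    (hsum : Summable fun n => Real.log ‖geomSum lam n‖ / 2 ^ n) :
    HasProd (fun j => ‖geomSum lam (j + 1)‖ ^ (-(3 : ℝ) / 4 ^ (j + 2)))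
      (Real.exp (-(3 / 4) * ∑' n, Real.log ‖geomSum lam n‖ / 4 ^ n)) := by
  have h := ((hasSum_nat_add_iff' 1).mpr (summable_div_four_pow hsum).hasSum).mul_left (-(3 / 4))
  simp only [Finset.range_one, Finset.sum_singleton, geomSum_zero, pow_zero, norm_one,
    Real.log_one, zero_div, sub_zero] at h
  convert h.rexp using 1
  funext j
  rw [Function.comp_apply, Real.rpow_def_of_pos (norm_pos_iff.mpr (hS (j + 1)))]
  congr 1
  rw [pow_succ _ (j + 1)]
  field_simp

/-- Let `λ ≠ 0` satisfy `1 + λ + ⋯ + λʲ ≠ 0` for all `j ≥ 1`, and suppose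
`∑_{i≥1} 2⁻ⁱ log |1 + λ + ⋯ + λⁱ|` converges.  Writing
`F_{λ,t}ⁿ(1,1) = (P_n(t), Q_n(t))`, the quantities
`|Res(P_n, Q_n)|^(-1/4^(n-1))` converge to
`|λ|⁻² ∏_{j≥1} |1 + λ + ⋯ + λʲ|^(-3·4^(-j-1))`, the infinite product being
convergent; this limit is the homogeneous capacity of `{G⁺ ≤ 0} ⊂ ℂ²`. -/
theorem resultant_limit_capacity (lam : ℂ) (hlam : lam ≠ 0)
    (hnz : ∀ j : ℕ, 1 ≤ j → ∑ i ∈ Finset.range (j + 1), lam ^ i ≠ 0)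
    (hsum : Summable (fun i : ℕ =>
      Real.log (norm (∑ j ∈ Finset.range (i + 1), lam ^ j)) / 2 ^ i))
    (P Q : ℕ → Polynomial ℂ)
    (hPQ : ∀ (n : ℕ) (t : ℂ), (Fh lam t)^[n] (1, 1) = ((P n).eval t, (Q n).eval t)) :
    Multipliable (fun j : ℕ =>
      (norm (∑ i ∈ Finset.range (j + 2), lam ^ i)) ^
        (-(3 : ℝ) / 4 ^ (j + 2))) ∧
    Tendsto (fun n : ℕ =>
        (norm (res (P n) (Q n))) ^ (-(1 : ℝ) / 4 ^ (n - 1)))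
      atTop
      (𝓝 ((norm lam) ^ (-2 : ℤ) * ∏' j : ℕ,
        (norm (∑ i ∈ Finset.range (j + 2), lam ^ i)) ^
          (-(3 : ℝ) / 4 ^ (j + 2)))) := by
  have hS : ∀ n, geomSum lam n ≠ 0
    | 0 => by simp [geomSum_zero]
    | n + 1 => hnz (n + 1) n.succ_pos
  have hprod : HasProd
      (fun j : ℕ => ‖∑ i ∈ Finset.range (j + 2), lam ^ i‖ ^ (-(3 : ℝ) / 4 ^ (j + 2)))
      (Real.exp (-(3 / 4) * ∑' n, Real.log ‖geomSum lam n‖ / 4 ^ n)) :=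
    hasProd_norm_geomSum_rpow hS hsum
  refine ⟨hprod.multipliable, ?_⟩
  rw [hprod.tprod_eq, ← tendsto_add_atTop_iff_nat 1]
  convert (Real.continuous_exp.tendsto _).comp (orbit_tendsto_log_norm_res hPQ hlam hS hsum).neg
    using 2 with m
  · rw [Function.comp_apply, Nat.add_sub_cancel,
      Real.rpow_def_of_pos (norm_pos_iff.mpr (orbit_res_ne_zero hPQ hlam hS m))]
    ring_nf
  · rw [neg_add, Real.exp_add, neg_mul]
    congr 1
    rw [← Real.rpow_intCast, Real.rpow_def_of_pos (norm_pos_iff.mpr hlam)]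
    push_cast
    ring_nf
end
end
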